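/- arXiv:2111.13942 — 4 statements merged into one kernel-verified Lean document; each statement's English description precedes it below -/
import Mathlib

section
/- Let α ∈ (0,1) and let p, q, r ∈ [1,+∞] with 1/p + 1/q = 1/r. If f ∈ B^α_{p,1}(ℝ^n) and g ∈ B^α_{q,1}(ℝ^n), then ‖𝒟^α(fg)‖_{L^r(ℝ^n)} ≤ [f]_{B^α_{p,1}(ℝ^n)} ‖g‖_{L^q(ℝ^n)} + ‖f‖_{L^p(ℝ^n)} [g]_{B^α_{q,1}(ℝ^n)}, where 𝒟^α u(x) = ∫_{ℝ^n} |u(y) - u(x)| / |y - x|^{n+α} dy. -/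
open MeasureTheory Metric
open scoped ENNReal NNReal

noncomputable section

abbrev En (n : ℕ) := EuclideanSpace ℝ (Fin n)

/-- Besov seminorm `[f]_{B^σ_{p,q}(ℝ^n)}` (with the usual sup modification for `q = ∞`). -/
def besov (n : ℕ) (σ : ℝ) (p q : ℝ≥0∞) {F : Type*} [NormedAddCommGroup F]
    (f : En n → F) : ℝ≥0∞ :=
  if q = ∞ then
    ⨆ h : {h : En n // h ≠ 0},
      eLpNorm (fun x => f (x + h.1) - f x) p volume / ENNReal.ofReal (‖h.1‖ ^ σ)
  else
    (∫⁻ h : En n, eLpNorm (fun x => f (x + h) - f x) p volume ^ q.toReal /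
      ENNReal.ofReal (‖h‖ ^ ((n : ℝ) + q.toReal * σ))) ^ (1 / q.toReal)

/-- `𝒟^α f (x) = ∫ |f(x+h)-f(x)|/|h|^{n+α} dh`. -/
def Dop (n : ℕ) (α : ℝ) (f : En n → ℝ) (x : En n) : ℝ :=
  ∫ h : En n, |f (x + h) - f x| / ‖h‖ ^ ((n : ℝ) + α)

/-- `𝒟^α_{NL}(f,g)(x) = ∫ |f(x+h)-f(x)||g(x+h)-g(x)|/|h|^{n+α} dh`. -/
def DopNL (n : ℕ) (α : ℝ) (f g : En n → ℝ) (x : En n) : ℝ :=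
  ∫ h : En n, |f (x + h) - f x| * |g (x + h) - g x| / ‖h‖ ^ ((n : ℝ) + α)

/-- The normalizing constant `μ_{n,α}`. -/
def muConst (n : ℕ) (α : ℝ) : ℝ :=
  2 ^ α * Real.pi ^ (-(n : ℝ) / 2) * Real.Gamma (((n : ℝ) + α + 1) / 2) /
    Real.Gamma ((1 - α) / 2)

/-- The fractional α-gradient `∇^α f`. -/
def fracGrad (n : ℕ) (α : ℝ) (f : En n → ℝ) (x : En n) : En n :=
  muConst n α • ∫ y : En n, (‖y - x‖ ^ ((n : ℝ) + α + 1))⁻¹ • ((f y - f x) • (y - x))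

/-- The fractional α-divergence `div^α φ`. -/
def fracDiv (n : ℕ) (α : ℝ) (φ : En n → En n) (x : En n) : ℝ :=
  muConst n α * ∫ y : En n, (inner ℝ (y - x) (φ y - φ x) : ℝ) / ‖y - x‖ ^ ((n : ℝ) + α + 1)

/-- The nonlocal fractional α-gradient `∇^α_{NL}(f,g)`. -/
def fracGradNL (n : ℕ) (α : ℝ) (f g : En n → ℝ) (x : En n) : En n :=
  muConst n α • ∫ y : En n, (‖y - x‖ ^ ((n : ℝ) + α + 1))⁻¹ •
    (((f y - f x) * (g y - g x)) • (y - x))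

/-- The nonlocal fractional α-divergence `div^α_{NL}(g,φ)`. -/
def fracDivNL (n : ℕ) (α : ℝ) (g : En n → ℝ) (φ : En n → En n) (x : En n) : ℝ :=
  muConst n α * ∫ y : En n,
    (g y - g x) * (inner ℝ (y - x) (φ y - φ x) : ℝ) / ‖y - x‖ ^ ((n : ℝ) + α + 1)

/-- `F` is a weak fractional α-gradient of `f`. -/
def IsWeakFracGrad (n : ℕ) (α : ℝ) (f : En n → ℝ) (F : En n → En n) : Prop :=
  ∀ φ : En n → En n, ContDiff ℝ (⊤ : ℕ∞) φ → HasCompactSupport φ →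
    ∫ x, f x * fracDiv n α φ x = -∫ x, (inner ℝ (φ x) (F x) : ℝ)

/-- `G` is a weak nonlocal fractional α-gradient of the pair `(f,g)`. -/
def IsWeakFracGradNL (n : ℕ) (α : ℝ) (f g : En n → ℝ) (G : En n → En n) : Prop :=
  ∀ φ : En n → En n, ContDiff ℝ (⊤ : ℕ∞) φ → HasCompactSupport φ →
    ∫ x, f x * fracDivNL n α g φ x = ∫ x, (inner ℝ (φ x) (G x) : ℝ)

/-- `D` is a weak nonlocal fractional α-divergence of the pair `(u,b)`. -/
def IsWeakFracDivNL (n : ℕ) (α : ℝ) (u : En n → ℝ) (b : En n → En n) (D : En n → ℝ) : Prop :=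
  ∀ ψ : En n → ℝ, ContDiff ℝ (⊤ : ℕ∞) ψ → HasCompactSupport ψ →
    ∫ x, (inner ℝ (b x) (fracGradNL n α u ψ x) : ℝ) = ∫ x, ψ x * D x

/-- `(σ, ν)` is a polar decomposition of the fractional variation measure `D^α f`. -/
def HasFracVariation (n : ℕ) (α : ℝ) (f : En n → ℝ) (σ : Measure (En n))
    (ν : En n → En n) : Prop :=
  IsFiniteMeasure σ ∧ ∀ φ : En n → En n, ContDiff ℝ (⊤ : ℕ∞) φ → HasCompactSupport φ →
    ∫ x, f x * fracDiv n α φ x = -∫ x, (inner ℝ (φ x) (ν x) : ℝ) ∂σ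

/-- The BMO seminorm. -/
def bmo (n : ℕ) (f : En n → ℝ) : ℝ≥0∞ :=
  ⨆ (x : En n) (r : {r : ℝ // 0 < r}),
    ENNReal.ofReal (⨍ y in ball x r.1, |f y - ⨍ z in ball x r.1, f z ∂volume| ∂volume)

end


open MeasureTheory Metric Function
open scoped ENNReal NNReal

section Helpers

variable {X H : Type*} [MeasurableSpace X] [MeasurableSpace H]

/-- essSup in a parameter is measurable. -/
lemma measurable_essSup_param (μ : Measure X) [SigmaFinite μ]
    {E : X × H → ℝ≥0∞} (hE : Measurable E) :
    Measurable fun h => essSup (fun x => E (x, h)) μ := by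
  have hm : ∀ c : ℝ≥0∞, Measurable fun h => μ {x | c < E (x, h)} := by
    intro c
    have hs : MeasurableSet {z : X × H | c < E z} := measurableSet_lt measurable_const hE
    exact measurable_measure_prodMk_right hs
  have key : (fun h => essSup (fun x => E (x, h)) μ)
      = fun h => ⨅ q : ℚ, (if μ {x | ((Real.toNNReal q : ℝ≥0) : ℝ≥0∞) < E (x, h)} = 0
          then ((Real.toNNReal q : ℝ≥0) : ℝ≥0∞) else ∞) := by
    funext h
    apply le_antisymm
    · refine le_iInf fun q => ?_
      split_ifs with h0
      · exact essSup_le_of_ae_le _ (ae_iff.2 (by simpa [not_le] using h0))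
      · exact le_top
    · by_contra hc
      push_neg at hc
      obtain ⟨q, hq0, hSq, hqI⟩ := ENNReal.lt_iff_exists_rat_btwn.1 hc
      have h0 : μ {x | ((Real.toNNReal q : ℝ≥0) : ℝ≥0∞) < E (x, h)} = 0 := by
        refine measure_mono_null (fun x hx => ?_) (meas_essSup_lt (f := fun x => E (x, h)) (μ := μ))
        exact lt_of_le_of_lt hSq.le hx
      have hle : (⨅ q : ℚ, (if μ {x | ((Real.toNNReal q : ℝ≥0) : ℝ≥0∞) < E (x, h)} = 0
          then ((Real.toNNReal q : ℝ≥0) : ℝ≥0∞) else ∞)) ≤ ((Real.toNNReal q : ℝ≥0) : ℝ≥0∞) :=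
        iInf_le_of_le q (by rw [if_pos h0])
      exact absurd (hle.trans_lt hqI) (lt_irrefl _)
  rw [key]
  refine Measurable.iInf fun q => Measurable.ite ?_ measurable_const measurable_const
  exact (hm _) (measurableSet_singleton 0)

/-- Minkowski's integral inequality for the essential supremum. -/
lemma essSup_lintegral_le (μ : Measure X) (ν : Measure H) [SigmaFinite μ] [SFinite ν]
    {F : X × H → ℝ≥0∞} (hF : Measurable F) :
    essSup (fun x => ∫⁻ h, F (x, h) ∂ν) μ ≤ ∫⁻ h, essSup (fun x => F (x, h)) μ ∂ν := by
  set M : H → ℝ≥0∞ := fun h => essSup (fun x => F (x, h)) μ with hM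
  have hMm : Measurable M := measurable_essSup_param μ hF
  set T' : Set (H × X) := {z | M z.1 < F (z.2, z.1)} with hT'
  have hT'm : MeasurableSet T' :=
    measurableSet_lt (hMm.comp measurable_fst) (hF.comp (measurable_snd.prodMk measurable_fst))
  have hnull : (ν.prod μ) T' = 0 := by
    rw [Measure.measure_prod_null hT'm]
    filter_upwards with h
    exact meas_essSup_lt (f := fun x => F (x, h)) (μ := μ)
  have hswap : (μ.prod ν) (Prod.swap ⁻¹' T') = 0 := by
    rw [← Measure.prod_swap] at hnull
    rwa [Measure.map_apply measurable_swap hT'm] at hnull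
  have hae : ∀ᵐ x ∂μ, ∀ᵐ h ∂ν, F (x, h) ≤ M h := by
    have hae0 : ∀ᵐ z ∂(μ.prod ν), ¬ (M z.2 < F z) := by
      rw [ae_iff]
      refine measure_mono_null (fun z hz => ?_) hswap
      have hz' : M z.2 < F z := not_not.1 hz
      show Prod.swap z ∈ T'
      exact hz'
    have h2 := Measure.ae_ae_of_ae_prod hae0
    filter_upwards [h2] with x hx
    filter_upwards [hx] with h hh
    exact not_lt.1 hh
  refine essSup_le_of_ae_le _ ?_
  filter_upwards [hae] with x hx
  exact lintegral_mono_ae hx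

/-- Minkowski's integral inequality, finite exponent. -/
lemma lintegral_lintegral_rpow_le (μ : Measure X) (ν : Measure H) [SigmaFinite μ] [SFinite ν]
    {F : X × H → ℝ≥0∞} (hF : Measurable F) {t : ℝ} (ht : 1 ≤ t) :
    (∫⁻ x, (∫⁻ h, F (x, h) ∂ν) ^ t ∂μ) ^ (1/t) ≤ ∫⁻ h, (∫⁻ x, F (x, h) ^ t ∂μ) ^ (1/t) ∂ν := by
  rcases eq_or_lt_of_le ht with h1 | h1
  · simp only [← h1, ENNReal.rpow_one, one_div_one_div, div_self, one_div, inv_one]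
    exact le_of_eq (lintegral_lintegral_swap hF.aemeasurable)
  set M := ∫⁻ h, (∫⁻ x, F (x, h) ^ t ∂μ) ^ (1/t) ∂ν with hMdef
  by_cases hMtop : M = ∞
  · exact hMtop ▸ le_top
  have ht0 : (0:ℝ) < t := zero_lt_one.trans_le ht
  have htne : t ≠ 0 := ht0.ne'
  have hconj : t.HolderConjugate (t.conjExponent) := Real.HolderConjugate.conjExponent h1
  set t' := t.conjExponent with ht'def
  set J := fun x => ∫⁻ h, F (x, h) ∂ν with hJdef
  have hJ : Measurable J := hF.lintegral_prod_right'
  have key : ∀ k : ℕ, (∫⁻ x in spanningSets μ k, (min (J x) k) ^ t ∂μ) ≤ M ^ t := by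
    intro k
    set A := spanningSets μ k with hAdef
    have hAm : MeasurableSet A := measurableSet_spanningSets μ k
    set m := fun x => min (J x) (k : ℝ≥0∞) with hmdef
    have hmm : Measurable m := hJ.min measurable_const
    have hmtop : ∀ x, m x ≠ ∞ := fun x =>
      ((min_le_right _ _).trans_lt (ENNReal.natCast_lt_top k)).ne
    set I := ∫⁻ x in A, m x ^ t ∂μ with hIdef
    have hIfin : I ≠ ∞ := by
      have hle : I ≤ (k : ℝ≥0∞) ^ t * μ A := by
        refine le_trans (lintegral_mono fun x => ?_) (le_of_eq (setLIntegral_const _ _))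
        exact ENNReal.rpow_le_rpow (min_le_right _ _) ht0.le
      exact ne_top_of_le_ne_top
        (ENNReal.mul_ne_top (ENNReal.rpow_ne_top_of_nonneg ht0.le (ENNReal.natCast_ne_top k))
          (measure_spanningSets_lt_top μ k).ne) hle
    rcases eq_or_ne I 0 with hI0 | hI0
    · show I ≤ M ^ t
      rw [hI0]; exact zero_le
    have hIt' : I ^ (1/t') ≠ ∞ := ENNReal.rpow_ne_top_of_nonneg hconj.symm.one_div_nonneg hIfin
    have hIt'0 : I ^ (1/t') ≠ 0 := by
      simp only [ne_eq, ENNReal.rpow_eq_zero_iff, not_or]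
      constructor
      · rintro ⟨h0, -⟩; exact hI0 h0
      · rintro ⟨htop, -⟩; exact hIfin htop
    have step : I ≤ I ^ (1/t') * M := by
      have hsub1 : (0:ℝ) < t - 1 := sub_pos.2 h1
      calc I = ∫⁻ x in A, m x ^ (t - 1) * m x ∂μ := by
              refine lintegral_congr fun x => ?_
              rcases eq_or_ne (m x) 0 with h0 | h0
              · rw [h0, ENNReal.zero_rpow_of_pos ht0, ENNReal.zero_rpow_of_pos hsub1, mul_zero]
              · have hadd := ENNReal.rpow_add (x := m x) (t-1) 1 h0 (hmtop x)
                rw [sub_add_cancel, ENNReal.rpow_one] at hadd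
                exact hadd
        _ ≤ ∫⁻ x in A, m x ^ (t - 1) * J x ∂μ :=
              lintegral_mono fun x => mul_le_mul_right (min_le_left _ _) _
        _ = ∫⁻ x in A, ∫⁻ h, m x ^ (t - 1) * F (x, h) ∂ν ∂μ := by
              refine lintegral_congr fun x => ?_
              rw [lintegral_const_mul' _ _ (ENNReal.rpow_ne_top_of_nonneg hsub1.le (hmtop x))]
        _ = ∫⁻ h, ∫⁻ x in A, m x ^ (t - 1) * F (x, h) ∂μ ∂ν := by
              refine lintegral_lintegral_swap ?_
              exact (((hmm.comp measurable_fst).pow_const _).mul hF).aemeasurable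
        _ ≤ ∫⁻ h, I ^ (1/t') * (∫⁻ x, F (x, h) ^ t ∂μ) ^ (1/t) ∂ν := by
              refine lintegral_mono fun h => ?_
              have hH := ENNReal.lintegral_mul_le_Lp_mul_Lq (μ.restrict A) hconj.symm
                (f := fun x => m x ^ (t-1)) (g := fun x => F (x, h))
                ((hmm.pow_const (t-1)).aemeasurable)
                ((hF.comp (measurable_id.prodMk measurable_const)).aemeasurable)
              simp only [Pi.mul_apply] at hH
              refine le_trans hH ?_
              have e1 : (∫⁻ x in A, (m x ^ (t-1)) ^ t' ∂μ) = I := by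
                refine lintegral_congr fun x => ?_
                rw [← ENNReal.rpow_mul, hconj.sub_one_mul_conj]
              rw [e1]
              refine mul_le_mul_right ?_ _
              refine ENNReal.rpow_le_rpow ?_ (by positivity)
              exact lintegral_mono' Measure.restrict_le_self le_rfl
        _ = I ^ (1/t') * M := lintegral_const_mul' _ _ hIt'
    have hexp : 1/t' + 1/t = 1 := by
      rw [one_div, one_div]
      exact hconj.symm.inv_add_inv_eq_inv.trans inv_one
    have hsplit : I = I ^ (1/t') * I ^ (1/t) := by
      rw [← ENNReal.rpow_add _ _ hI0 hIfin, hexp, ENNReal.rpow_one]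
    have hfin : I ^ (1/t) ≤ M := by
      have h2 : I ^ (1/t') * I ^ (1/t) ≤ I ^ (1/t') * M :=
        le_trans (le_of_eq hsplit.symm) step
      exact (ENNReal.mul_le_mul_iff_right hIt'0 hIt').1 h2
    show I ≤ M ^ t
    calc I = (I ^ (1/t)) ^ t := by
            rw [← ENNReal.rpow_mul, one_div, inv_mul_cancel₀ htne, ENNReal.rpow_one]
      _ ≤ M ^ t := ENNReal.rpow_le_rpow hfin ht0.le
  have mc : ∫⁻ x, J x ^ t ∂μ ≤ M ^ t := by
    set φ : ℕ → X → ℝ≥0∞ :=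
      fun k => (spanningSets μ k).indicator (fun x => min (J x) k ^ t) with hφdef
    have hφm : ∀ k, Measurable (φ k) := fun k =>
      ((hJ.min measurable_const).pow_const t).indicator (measurableSet_spanningSets μ k)
    have hmono : Monotone φ := by
      intro k l hkl x
      simp only [hφdef]
      rcases Set.indicator_eq_zero_or_self (spanningSets μ k) (fun x => min (J x) k ^ t) x
        with h0 | hx
      · rw [h0]; exact zero_le
      · by_cases hxk : x ∈ spanningSets μ k
        · have hxl : x ∈ spanningSets μ l := monotone_spanningSets μ hkl hxk
          rw [Set.indicator_of_mem hxk, Set.indicator_of_mem hxl]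
          exact ENNReal.rpow_le_rpow (min_le_min le_rfl (Nat.cast_le.2 hkl)) ht0.le
        · rw [Set.indicator_of_notMem hxk]; exact zero_le
    have hsup : ∀ x, ⨆ k, φ k x = J x ^ t := by
      intro x
      obtain ⟨N, hN⟩ : ∃ N, x ∈ spanningSets μ N := by
        have : x ∈ ⋃ k, spanningSets μ k := by rw [iUnion_spanningSets]; trivial
        exact Set.mem_iUnion.1 this
      apply le_antisymm
      · refine iSup_le fun k => ?_
        refine le_trans (Set.indicator_le_self _ _ x) ?_
        exact ENNReal.rpow_le_rpow (min_le_left _ _) ht0.le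
      · rcases eq_or_ne (J x) ∞ with hJx | hJx
        · rw [hJx, ENNReal.top_rpow_of_pos ht0]
          rw [← ENNReal.iSup_natCast]
          refine iSup_le fun k => ?_
          rcases Nat.eq_zero_or_pos k with hk | hk
          · subst hk; simp
          · set j := max k N with hj
            have hxj : x ∈ spanningSets μ j :=
              monotone_spanningSets μ (le_max_right _ _) hN
            have hφj : φ j x = (j : ℝ≥0∞) ^ t := by
              rw [hφdef]
              simp only [Set.indicator_of_mem hxj, hJx]
              rw [min_eq_right (le_top : ((j:ℕ) : ℝ≥0∞) ≤ ⊤)]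
            have h1j : (1 : ℝ≥0∞) ≤ (j : ℝ≥0∞) := by
              exact_mod_cast Nat.one_le_cast.2 (le_trans hk (le_max_left _ _))
            calc (k : ℝ≥0∞) ≤ (j : ℝ≥0∞) := Nat.cast_le.2 (le_max_left _ _)
              _ = (j : ℝ≥0∞) ^ (1:ℝ) := (ENNReal.rpow_one _).symm
              _ ≤ (j : ℝ≥0∞) ^ t := ENNReal.rpow_le_rpow_of_exponent_le h1j ht
              _ = φ j x := hφj.symm
              _ ≤ ⨆ k, φ k x := le_iSup (fun k => φ k x) j
        · obtain ⟨nn, hnn⟩ := ENNReal.exists_nat_gt hJx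
          set j := max nn N with hj
          have hxj : x ∈ spanningSets μ j := monotone_spanningSets μ (le_max_right _ _) hN
          have : φ j x = J x ^ t := by
            rw [hφdef]
            simp only [Set.indicator_of_mem hxj]
            rw [min_eq_left (le_trans hnn.le (Nat.cast_le.2 (le_max_left _ _)))]
          exact this ▸ le_iSup (fun k => φ k x) j
    calc ∫⁻ x, J x ^ t ∂μ = ∫⁻ x, ⨆ k, φ k x ∂μ := lintegral_congr fun x => (hsup x).symm
      _ = ⨆ k, ∫⁻ x, φ k x ∂μ := lintegral_iSup hφm hmono
      _ ≤ M ^ t := by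
          refine iSup_le fun k => ?_
          rw [hφdef, lintegral_indicator (measurableSet_spanningSets μ k)]
          exact key k
  calc (∫⁻ x, J x ^ t ∂μ) ^ (1/t) ≤ (M ^ t) ^ (1/t) :=
        ENNReal.rpow_le_rpow mc (by positivity)
    _ = M := by rw [← ENNReal.rpow_mul, mul_one_div, div_self htne, ENNReal.rpow_one]

end Helpers

section MainHelpers

open MeasureTheory Metric Function
open scoped ENNReal NNReal

variable {X H : Type*} [MeasurableSpace X] [MeasurableSpace H]

/-- The `eLpNorm` of a translated difference is a measurable function of the shift. -/
lemma measurable_eLpNorm_shift {G : Type*} [MeasurableSpace G] [AddGroup G] [MeasurableAdd₂ G]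
    (μ : Measure G) [SigmaFinite μ] (p : ℝ≥0∞) {f : G → ℝ} (hf : Measurable f) :
    Measurable fun h => eLpNorm (fun x => f (x + h) - f x) p μ := by
  have hE : Measurable fun z : G × G => (‖f (z.1 + z.2) - f z.1‖₊ : ℝ≥0∞) :=
    ((hf.comp (measurable_fst.add measurable_snd)).sub (hf.comp measurable_fst)).enorm
  rcases eq_or_ne p 0 with hp | hp
  · simp only [hp, eLpNorm_exponent_zero]
    exact measurable_const
  rcases eq_or_ne p ∞ with hptop | hptop
  · subst hptop
    simp only [eLpNorm_exponent_top, eLpNormEssSup]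
    exact measurable_essSup_param (E := fun z : G × G => (‖f (z.1 + z.2) - f z.1‖₊ : ℝ≥0∞))
      μ hE
  · simp only [eLpNorm_eq_lintegral_rpow_enorm_toReal hp hptop]
    have h2 : Measurable fun h =>
        ∫⁻ x, ((fun z : G × G => (‖f (z.1 + z.2) - f z.1‖₊ : ℝ≥0∞) ^ p.toReal) (x, h)) ∂μ :=
      Measurable.lintegral_prod_left' (hE.pow_const p.toReal)
    exact h2.pow_const _

end MainHelpers

theorem statement3 (n : ℕ) (α : ℝ) (hα : α ∈ Set.Ioo (0 : ℝ) 1)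
    (p q r : ℝ≥0∞) (hp : 1 ≤ p) (hq : 1 ≤ q) (hr : 1 ≤ r)
    (hpqr : 1 / p + 1 / q = 1 / r)
    (f g : En n → ℝ) (hf : MemLp f p volume) (hfB : besov n α p 1 f < ∞)
    (hg : MemLp g q volume) (hgB : besov n α q 1 g < ∞) :
    eLpNorm (Dop n α (fun x => f x * g x)) r volume ≤
      besov n α p 1 f * eLpNorm g q volume + eLpNorm f p volume * besov n α q 1 g := by
  obtain ⟨hα0, hα1⟩ := hα
  rcases Nat.eq_zero_or_pos n with hn0 | hn
  · subst hn0
    haveI : Subsingleton (En 0) := ⟨fun a b => by ext i; exact i.elim0⟩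
    have hD : Dop 0 α (fun x => f x * g x) = fun _ => 0 := by
      funext x
      have hxh : ∀ h : En 0, x + h = x := fun h => Subsingleton.elim _ _
      simp only [Dop]
      have : (fun h : En 0 => |f (x + h) * g (x + h) - f x * g x| / ‖h‖ ^ ((0:ℕ) + α : ℝ))
          = fun _ => 0 := by
        funext h
        rw [hxh h, sub_self, abs_zero, zero_div]
      rw [this, integral_zero]
    rw [hD, eLpNorm_zero']
    exact zero_le
  -- positive dimension: set up instances
  haveI hNT : Nontrivial (En n) := ⟨⟨0, EuclideanSpace.single ⟨0, hn⟩ 1, fun hx => by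
    have := congrArg (fun v : En n => v ⟨0, hn⟩) hx
    rw [EuclideanSpace.single_apply] at this
    simp at this⟩⟩
  haveI : Filter.NeBot (nhdsWithin (0 : En n) {(0 : En n)}ᶜ) :=
    Module.punctured_nhds_neBot ℝ (En n) 0
  -- translation facts
  have qmpAdd : Measure.QuasiMeasurePreserving (fun z : En n × En n => z.1 + z.2)
      ((volume : Measure (En n)).prod volume) volume := by
    have h1 := MeasureTheory.quasiMeasurePreserving_sub (volume : Measure (En n)) volume
    have h2 : MeasurePreserving (fun z : En n × En n => (z.1, -z.2))
        ((volume : Measure (En n)).prod volume) ((volume : Measure (En n)).prod volume) :=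
      (MeasurePreserving.id volume).prod (Measure.measurePreserving_neg volume)
    have h3 := h1.comp h2.quasiMeasurePreserving
    have heq : ((fun z : En n × En n => z.1 - z.2) ∘ fun z : En n × En n => (z.1, -z.2))
        = fun z : En n × En n => z.1 + z.2 := funext fun z => sub_neg_eq_add _ _
    rwa [heq] at h3
  have hbesov_congr : ∀ (p' : ℝ≥0∞) (u v : En n → ℝ), u =ᵐ[volume] v →
      besov n α p' 1 u = besov n α p' 1 v := by
    intro p' u v huv
    simp only [besov, if_neg (ENNReal.one_ne_top)]
    congr 1
    refine lintegral_congr fun h => ?_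
    have he : eLpNorm (fun x => u (x + h) - u x) p' volume
        = eLpNorm (fun x => v (x + h) - v x) p' volume :=
      eLpNorm_congr_ae
        (((measurePreserving_add_right volume h).quasiMeasurePreserving.ae_eq huv).sub huv)
    rw [he]
  -- replace f and g by measurable representatives
  obtain ⟨f₀, hf₀sm, hff₀⟩ := hf.1
  obtain ⟨g₀, hg₀sm, hgg₀⟩ := hg.1
  have hf₀m : Measurable f₀ := hf₀sm.measurable
  have hg₀m : Measurable g₀ := hg₀sm.measurable
  have hDopae : Dop n α (fun x => f x * g x) =ᵐ[volume] Dop n α (fun x => f₀ x * g₀ x) := by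
    have hae2 : ∀ᵐ z ∂((volume : Measure (En n)).prod volume),
        f (z.1 + z.2) = f₀ (z.1 + z.2) ∧ g (z.1 + z.2) = g₀ (z.1 + z.2) :=
      qmpAdd.ae (hff₀.and hgg₀)
    have h3 := Measure.ae_ae_of_ae_prod hae2
    filter_upwards [h3, hff₀, hgg₀] with x hx hfx hgx
    simp only [Dop]
    refine integral_congr_ae ?_
    filter_upwards [hx] with h hh
    rw [hh.1, hh.2, hfx, hgx]
  rw [eLpNorm_congr_ae hDopae, hbesov_congr p f f₀ hff₀, hbesov_congr q g g₀ hgg₀,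
    eLpNorm_congr_ae hff₀, eLpNorm_congr_ae hgg₀]
  have hFpfin : eLpNorm f₀ p volume ≠ ∞ := by
    rw [← eLpNorm_congr_ae hff₀]; exact hf.2.ne
  have hGfin : eLpNorm g₀ q volume ≠ ∞ := by
    rw [← eLpNorm_congr_ae hgg₀]; exact hg.2.ne
  clear hDopae hff₀ hgg₀ hf hg hfB hgB hf₀sm hg₀sm f g
  -- notation
  have hr0 : r ≠ 0 := (zero_lt_one.trans_le hr).ne'
  set w : En n → ℝ≥0∞ := fun h => ENNReal.ofReal (‖h‖ ^ ((n : ℝ) + α)) with hwdef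
  have hwm : Measurable w := ENNReal.measurable_ofReal.comp (measurable_norm.pow_const _)
  have hwtop : ∀ h, w h ≠ ∞ := fun h => ENNReal.ofReal_ne_top
  have hw0 : ∀ᵐ h ∂(volume : Measure (En n)), w h ≠ 0 := by
    rw [ae_iff]
    refine measure_mono_null ?_ (measure_singleton (0 : En n))
    intro h hh
    simp only [Set.mem_setOf_eq, not_not] at hh
    simp only [Set.mem_singleton_iff]
    by_contra hne
    exact absurd hh (ne_of_gt (ENNReal.ofReal_pos.2
      (Real.rpow_pos_of_pos (norm_pos_iff.2 hne) _)))
  set ψ : En n → En n → ℝ := fun h x =>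
    |f₀ (x + h) - f₀ x| * |g₀ (x + h)| + |f₀ x| * |g₀ (x + h) - g₀ x| with hψdef
  set F : En n × En n → ℝ≥0∞ := fun z => (‖ψ z.2 z.1‖₊ : ℝ≥0∞) / w z.2 with hFdef
  have hFm : Measurable F := by
    have h1 : Measurable fun z : En n × En n => ψ z.2 z.1 := by
      have ha := hf₀m.comp (measurable_fst.add measurable_snd)
      have hb := hg₀m.comp (measurable_fst.add measurable_snd)
      have hc : Measurable fun z : En n × En n => f₀ z.1 := hf₀m.comp measurable_fst
      have hd : Measurable fun z : En n × En n => g₀ z.1 := hg₀m.comp measurable_fst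
      exact (((ha.sub hc).abs.mul hb.abs).add (hc.abs.mul ((hb.sub hd).abs)))
    exact h1.enorm.div (hwm.comp measurable_snd)
  -- pointwise bound
  have hpt : ∀ x, (‖Dop n α (fun y => f₀ y * g₀ y) x‖₊ : ℝ≥0∞) ≤ ∫⁻ h, F (x, h) ∂volume := by
    intro x
    refine le_trans (enorm_integral_le_lintegral_enorm _) (lintegral_mono fun h => ?_)
    show (‖|f₀ (x + h) * g₀ (x + h) - f₀ x * g₀ x| / ‖h‖ ^ ((n : ℝ) + α)‖₊ : ℝ≥0∞)
        ≤ (‖ψ h x‖₊ : ℝ≥0∞) / w h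
    rcases eq_or_ne (‖h‖ ^ ((n : ℝ) + α)) 0 with hz | hz
    · rw [hz, div_zero]
      simp
    · rw [nnnorm_div, ENNReal.coe_div (by simpa [nnnorm_eq_zero] using hz)]
      have hden : ((‖(‖h‖ ^ ((n : ℝ) + α) : ℝ)‖₊ : ℝ≥0) : ℝ≥0∞) = w h :=
        Real.enorm_eq_ofReal (Real.rpow_nonneg (norm_nonneg h) _)
      rw [hden]
      refine ENNReal.div_le_div_right (ENNReal.coe_le_coe.2 ?_) _
      have hψ0 : 0 ≤ ψ h x := by positivity
      have htri : |f₀ (x + h) * g₀ (x + h) - f₀ x * g₀ x| ≤ ψ h x := by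
        have hid : f₀ (x + h) * g₀ (x + h) - f₀ x * g₀ x
            = (f₀ (x + h) - f₀ x) * g₀ (x + h) + f₀ x * (g₀ (x + h) - g₀ x) := by ring
        rw [hid]
        refine (abs_add_le _ _).trans ?_
        rw [abs_mul, abs_mul]
      rw [← NNReal.coe_le_coe]
      simp only [coe_nnnorm, Real.norm_eq_abs, abs_abs]
      rwa [abs_of_nonneg hψ0]
  -- the Besov seminorm reformulated
  set A : En n → ℝ≥0∞ := fun h => eLpNorm (fun x => f₀ (x + h) - f₀ x) p volume with hAdef
  set B : En n → ℝ≥0∞ := fun h => eLpNorm (fun x => g₀ (x + h) - g₀ x) q volume with hBdef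
  have hA : Measurable A := measurable_eLpNorm_shift volume p hf₀m
  have hB : Measurable B := measurable_eLpNorm_shift volume q hg₀m
  have hbesovf : besov n α p 1 f₀ = ∫⁻ h, A h / w h ∂volume := by
    simp only [besov, if_neg (ENNReal.one_ne_top), ENNReal.toReal_one, ENNReal.rpow_one,
      one_mul, one_div_one, hAdef, hwdef]
  have hbesovg : besov n α q 1 g₀ = ∫⁻ h, B h / w h ∂volume := by
    simp only [besov, if_neg (ENNReal.one_ne_top), ENNReal.toReal_one, ENNReal.rpow_one,
      one_mul, one_div_one, hBdef, hwdef]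
  -- per-shift estimate
  have hkey2 : ∀ h : En n, eLpNorm (ψ h) r volume
      ≤ A h * eLpNorm g₀ q volume + eLpNorm f₀ p volume * B h := by
    intro h
    have hΔfm : Measurable fun x => f₀ (x + h) - f₀ x :=
      (hf₀m.comp (measurable_add_const h)).sub hf₀m
    have hΔgm : Measurable fun x => g₀ (x + h) - g₀ x :=
      (hg₀m.comp (measurable_add_const h)).sub hg₀m
    have hgsm : Measurable fun x => g₀ (x + h) := hg₀m.comp (measurable_add_const h)
    have hu1m : Measurable fun x => |f₀ (x + h) - f₀ x| * |g₀ (x + h)| :=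
      hΔfm.abs.mul hgsm.abs
    have hu2m : Measurable fun x => |f₀ x| * |g₀ (x + h) - g₀ x| := hf₀m.abs.mul hΔgm.abs
    have step1 : eLpNorm (ψ h) r volume
        ≤ eLpNorm (fun x => |f₀ (x + h) - f₀ x| * |g₀ (x + h)|) r volume
          + eLpNorm (fun x => |f₀ x| * |g₀ (x + h) - g₀ x|) r volume :=
      eLpNorm_add_le hu1m.aestronglyMeasurable hu2m.aestronglyMeasurable hr
    have step2 : eLpNorm (fun x => |f₀ (x + h) - f₀ x| * |g₀ (x + h)|) r volume
        ≤ A h * eLpNorm (fun x => g₀ (x + h)) q volume :=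
      by
        haveI : ENNReal.HolderTriple p q r := ⟨by simpa [one_div] using hpqr⟩
        have := eLpNorm_le_eLpNorm_mul_eLpNorm_of_nnnorm (μ := volume) (p := p) (q := q) (r := r) hΔfm.aestronglyMeasurable
          hgsm.aestronglyMeasurable (fun a b => |a| * |b|) 1
          (Filter.Eventually.of_forall fun x => le_of_eq
            (by rw [one_mul, nnnorm_mul, Real.nnnorm_abs, Real.nnnorm_abs]))
        rwa [ENNReal.coe_one, one_mul] at this
    have step3 : eLpNorm (fun x => |f₀ x| * |g₀ (x + h) - g₀ x|) r volume
        ≤ eLpNorm f₀ p volume * B h :=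
      by
        haveI : ENNReal.HolderTriple p q r := ⟨by simpa [one_div] using hpqr⟩
        have := eLpNorm_le_eLpNorm_mul_eLpNorm_of_nnnorm (μ := volume) (p := p) (q := q) (r := r) hf₀m.aestronglyMeasurable
          hΔgm.aestronglyMeasurable (fun a b => |a| * |b|) 1
          (Filter.Eventually.of_forall fun x => le_of_eq
            (by rw [one_mul, nnnorm_mul, Real.nnnorm_abs, Real.nnnorm_abs]))
        rwa [ENNReal.coe_one, one_mul] at this
    have htrans : eLpNorm (fun x => g₀ (x + h)) q volume = eLpNorm g₀ q volume :=
      eLpNorm_comp_measurePreserving hg₀m.aestronglyMeasurable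
        (measurePreserving_add_right volume h)
    refine step1.trans (add_le_add ?_ step3)
    rw [htrans] at step2
    exact step2
  -- Minkowski step
  have keyMain : eLpNorm (Dop n α (fun y => f₀ y * g₀ y)) r volume
      ≤ ∫⁻ h, eLpNorm (ψ h) r volume / w h ∂volume := by
    rcases eq_or_ne r ∞ with hrtop | hrtop
    · subst hrtop
      rw [eLpNorm_exponent_top, eLpNormEssSup]
      calc essSup (fun x => (‖Dop n α (fun y => f₀ y * g₀ y) x‖₊ : ℝ≥0∞)) volume
          ≤ essSup (fun x => ∫⁻ h, F (x, h) ∂volume) volume :=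
            essSup_mono_ae (Filter.Eventually.of_forall hpt)
        _ ≤ ∫⁻ h, essSup (fun x => F (x, h)) volume ∂volume :=
            essSup_lintegral_le volume volume hFm
        _ = ∫⁻ h, eLpNorm (ψ h) ∞ volume / w h ∂volume := by
            refine lintegral_congr fun h => ?_
            have hfun : (fun x => F (x, h)) = fun x => (w h)⁻¹ * (‖ψ h x‖₊ : ℝ≥0∞) :=
              funext fun x => by rw [hFdef]; dsimp only; rw [div_eq_mul_inv, mul_comm]
            rw [hfun, ENNReal.essSup_const_mul, eLpNorm_exponent_top, eLpNormEssSup,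
              div_eq_mul_inv, mul_comm]
            rfl
    · have ht1 : 1 ≤ r.toReal := by
        rw [← ENNReal.toReal_one]
        exact ENNReal.toReal_mono hrtop hr
      have ht0 : (0:ℝ) < r.toReal := zero_lt_one.trans_le ht1
      rw [eLpNorm_eq_lintegral_rpow_enorm_toReal hr0 hrtop]
      calc (∫⁻ x, (‖Dop n α (fun y => f₀ y * g₀ y) x‖₊ : ℝ≥0∞) ^ r.toReal ∂volume)
            ^ (1 / r.toReal)
          ≤ (∫⁻ x, (∫⁻ h, F (x, h) ∂volume) ^ r.toReal ∂volume) ^ (1 / r.toReal) :=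
            ENNReal.rpow_le_rpow
              (lintegral_mono fun x => ENNReal.rpow_le_rpow (hpt x) ht0.le) (by positivity)
        _ ≤ ∫⁻ h, (∫⁻ x, F (x, h) ^ r.toReal ∂volume) ^ (1 / r.toReal) ∂volume :=
            lintegral_lintegral_rpow_le volume volume hFm ht1
        _ ≤ ∫⁻ h, eLpNorm (ψ h) r volume / w h ∂volume := by
            refine lintegral_mono_ae ?_
            filter_upwards [hw0] with h hwh
            have hwt : (w h) ^ r.toReal ≠ 0 :=
              ne_of_gt (ENNReal.rpow_pos (pos_iff_ne_zero.2 hwh) (hwtop h))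
            have hinvne : ((w h) ^ r.toReal)⁻¹ ≠ ∞ := ENNReal.inv_ne_top.2 hwt
            have h2 : (∫⁻ x, F (x, h) ^ r.toReal ∂volume)
                = (∫⁻ x, ((‖ψ h x‖₊ : ℝ≥0∞)) ^ r.toReal ∂volume) * ((w h) ^ r.toReal)⁻¹ := by
              calc ∫⁻ x, F (x, h) ^ r.toReal ∂volume
                  = ∫⁻ x, ((‖ψ h x‖₊ : ℝ≥0∞)) ^ r.toReal * ((w h) ^ r.toReal)⁻¹ ∂volume := by
                    refine lintegral_congr fun x => ?_
                    rw [hFdef]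
                    dsimp only
                    rw [ENNReal.div_rpow_of_nonneg _ _ ht0.le, div_eq_mul_inv]
                _ = _ := lintegral_mul_const' _ _ hinvne
            rw [h2, ENNReal.mul_rpow_of_nonneg _ _ (by positivity), ENNReal.inv_rpow,
              ← ENNReal.rpow_mul, mul_one_div, div_self ht0.ne', ENNReal.rpow_one,
              eLpNorm_eq_lintegral_rpow_enorm_toReal hr0 hrtop]
            exact le_of_eq (div_eq_mul_inv _ _).symm
  -- conclusion
  calc eLpNorm (Dop n α (fun y => f₀ y * g₀ y)) r volume
      ≤ ∫⁻ h, eLpNorm (ψ h) r volume / w h ∂volume := keyMain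
    _ ≤ ∫⁻ h, (A h / w h * eLpNorm g₀ q volume
          + eLpNorm f₀ p volume * (B h / w h)) ∂volume := by
        refine lintegral_mono fun h => ?_
        calc eLpNorm (ψ h) r volume / w h
            ≤ (A h * eLpNorm g₀ q volume + eLpNorm f₀ p volume * B h) / w h :=
              ENNReal.div_le_div_right (hkey2 h) _
          _ = A h / w h * eLpNorm g₀ q volume + eLpNorm f₀ p volume * (B h / w h) := by
              rw [ENNReal.add_div]
              congr 1
              · rw [div_eq_mul_inv, div_eq_mul_inv, mul_right_comm]
              · rw [mul_div_assoc]
    _ = (∫⁻ h, A h / w h ∂volume) * eLpNorm g₀ q volume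
          + eLpNorm f₀ p volume * ∫⁻ h, B h / w h ∂volume := by
        rw [lintegral_add_left (f := fun h => A h / w h * eLpNorm g₀ q volume) ((hA.div hwm).mul_const _),
          lintegral_mul_const' _ _ hGfin, lintegral_const_mul' _ _ hFpfin]
    _ = besov n α p 1 f₀ * eLpNorm g₀ q volume + eLpNorm f₀ p volume * besov n α q 1 g₀ := by
        rw [hbesovf, hbesovg]
end

section
/- Let α ∈ (0,1) and let p, q ∈ [1,+∞] with 1/p + 1/q = 1. If f ∈ B^α_{p,1}(ℝ^n) and φ ∈ B^α_{q,1}(ℝ^n;ℝ^n), then the integration-by-parts formula ∫_{ℝ^n} f div^α φ dx = - ∫_{ℝ^n} φ · ∇^α f dx holds, where ∇^α and div^α are the fractional gradient and fractional divergence of order α. -/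
open MeasureTheory Metric
open scoped ENNReal NNReal

noncomputable section AuxIBP

open Real MeasureTheory

variable {n : ℕ}

lemma aux_besov_one (σ : ℝ) (p : ℝ≥0∞) {F : Type*} [NormedAddCommGroup F] (f : En n → F) :
    besov n σ p 1 f
      = ∫⁻ h : En n, eLpNorm (fun x => f (x + h) - f x) p volume
          / ENNReal.ofReal (‖h‖ ^ ((n : ℝ) + σ)) := by
  simp [besov]

lemma aux_abs_inner_div_le {β γ : ℝ} (hβ : β = γ + 1) (hγ : 0 < γ) (u v : En n) :
    |(inner ℝ u v : ℝ) / ‖u‖ ^ β| ≤ ‖v‖ / ‖u‖ ^ γ := by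
  rcases eq_or_ne u 0 with rfl | hu
  · have hβ0 : β ≠ 0 := by rw [hβ]; positivity
    simp [Real.zero_rpow hβ0, Real.zero_rpow hγ.ne']
  · have hu' : 0 < ‖u‖ := norm_pos_iff.mpr hu
    have h1 : ‖u‖ ^ β = ‖u‖ ^ γ * ‖u‖ := by rw [hβ, Real.rpow_add_one hu'.ne']
    rw [abs_div, abs_of_nonneg (by positivity : (0:ℝ) ≤ ‖u‖ ^ β),
      div_le_div_iff₀ (by positivity) (by positivity)]
    calc |(inner ℝ u v : ℝ)| * ‖u‖ ^ γ ≤ (‖u‖ * ‖v‖) * ‖u‖ ^ γ := by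
          gcongr; exact abs_real_inner_le_norm u v
      _ = ‖v‖ * ‖u‖ ^ β := by rw [h1]; ring

lemma aux_norm_V_le {β γ : ℝ} (hβ : β = γ + 1) (hγ : 0 < γ) (u : En n) (t : ℝ) :
    ‖(‖u‖ ^ β)⁻¹ • (t • u)‖ ≤ |t| / ‖u‖ ^ γ := by
  rcases eq_or_ne u 0 with rfl | hu
  · simp [Real.zero_rpow hγ.ne']
  · have hu' : 0 < ‖u‖ := norm_pos_iff.mpr hu
    have h1 : ‖u‖ ^ β = ‖u‖ ^ γ * ‖u‖ := by rw [hβ, Real.rpow_add_one hu'.ne']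
    apply le_of_eq
    rw [norm_smul, norm_smul, norm_inv, Real.norm_eq_abs, Real.norm_eq_abs,
      abs_of_nonneg (by positivity : (0:ℝ) ≤ ‖u‖ ^ β), h1]
    have h2 : (0:ℝ) < ‖u‖ ^ γ := by positivity
    field_simp

lemma aux_lintegral_holder {F : Type*} [NormedAddCommGroup F] [NormedSpace ℝ F]
    {p q : ℝ≥0∞} (hpq : 1 / p + 1 / q = 1)
    {f : En n → ℝ} {g : En n → F} (hf : AEStronglyMeasurable f volume)
    (hg : AEStronglyMeasurable g volume) :
    ∫⁻ x : En n, (‖f x‖₊ : ℝ≥0∞) * ‖g x‖₊ ≤ eLpNorm f p volume * eLpNorm g q volume := by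
  have h1 : ∫⁻ x : En n, (‖f x‖₊ : ℝ≥0∞) * ‖g x‖₊
      = eLpNorm (fun x => f x • g x) 1 volume := by
    rw [eLpNorm_one_eq_lintegral_enorm]
    simp_rw [enorm_eq_nnnorm, nnnorm_smul, ENNReal.coe_mul]
  rw [h1]
  exact eLpNorm_smul_le_mul_eLpNorm hg hf (hpqr := ⟨by simpa [one_div] using hpq⟩)

lemma aux_integrable_holder {F : Type*} [NormedAddCommGroup F] [NormedSpace ℝ F]
    {p q : ℝ≥0∞} (hpq : 1 / p + 1 / q = 1)
    {f : En n → ℝ} {g : En n → F} (hf : MemLp f p volume) (hg : MemLp g q volume) :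
    Integrable (fun x => f x • g x) volume :=
  memLp_one_iff_integrable.mp (hg.smul hf (hpqr := ⟨by simpa [one_div] using hpq⟩))

lemma aux_aesm_shift {F : Type*} [TopologicalSpace F] {f : En n → F}
    (hf : AEStronglyMeasurable f volume) :
    AEStronglyMeasurable (fun z : En n × En n => f (z.1 + z.2))
      ((volume : Measure (En n)).prod volume) :=
  hf.comp_snd.comp_quasiMeasurePreserving
    (measurePreserving_prod_add volume volume).quasiMeasurePreserving

lemma aux_memLp_shift {F : Type*} [NormedAddCommGroup F] {p : ℝ≥0∞} {f : En n → F}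
    (hf : MemLp f p volume) (h : En n) :
    MemLp (fun x => f (x + h)) p volume :=
  hf.comp_measurePreserving (measurePreserving_add_right volume h)

lemma aux_nnnorm_bound {γ β : ℝ} (hβ : β = γ + 1) (hγ : 0 < γ)
    (a : ℝ) (h v : En n) (hh : h ≠ 0) :
    (‖a * ((inner ℝ h v : ℝ) / ‖h‖ ^ β)‖₊ : ℝ≥0∞)
      ≤ (‖a‖₊ * ‖v‖₊ : ℝ≥0∞) / ENNReal.ofReal (‖h‖ ^ γ) := by
  have hpos : 0 < ‖h‖ ^ γ := Real.rpow_pos_of_pos (norm_pos_iff.mpr hh) γ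
  have hreal : |a * ((inner ℝ h v : ℝ) / ‖h‖ ^ β)| ≤ |a| * ‖v‖ / ‖h‖ ^ γ := by
    rw [abs_mul, mul_div_assoc]
    exact mul_le_mul_of_nonneg_left (aux_abs_inner_div_le hβ hγ h v) (abs_nonneg a)
  calc (‖a * ((inner ℝ h v : ℝ) / ‖h‖ ^ β)‖₊ : ℝ≥0∞)
      = ENNReal.ofReal (|a * ((inner ℝ h v : ℝ) / ‖h‖ ^ β)|) := Real.enorm_eq_ofReal_abs _
    _ ≤ ENNReal.ofReal (|a| * ‖v‖ / ‖h‖ ^ γ) := ENNReal.ofReal_le_ofReal hreal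
    _ = (‖a‖₊ * ‖v‖₊ : ℝ≥0∞) / ENNReal.ofReal (‖h‖ ^ γ) := by
        rw [ENNReal.ofReal_div_of_pos hpos, ENNReal.ofReal_mul (abs_nonneg a),
          ← Real.enorm_eq_ofReal_abs, ofReal_norm_eq_enorm, enorm_eq_nnnorm, enorm_eq_nnnorm]

lemma aux_integrable_uncurry {γ β : ℝ} (hβ : β = γ + 1) (hγ : 0 < γ)
    (u : En n × En n → ℝ) (v : En n × En n → En n)
    (hu : AEStronglyMeasurable u ((volume : Measure (En n)).prod volume))
    (hv : AEStronglyMeasurable v ((volume : Measure (En n)).prod volume))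
    (C : En n → ℝ≥0∞)
    (hC : ∀ h : En n, ∫⁻ x : En n, (‖u (x, h)‖₊ : ℝ≥0∞) * ‖v (x, h)‖₊ ≤ C h)
    (hfin : (∫⁻ h : En n, C h / ENNReal.ofReal (‖h‖ ^ γ)) < ∞) :
    Integrable (fun z : En n × En n => u z * ((inner ℝ z.2 (v z) : ℝ) / ‖z.2‖ ^ β))
      ((volume : Measure (En n)).prod volume) := by
  have hmeas : AEStronglyMeasurable
      (fun z : En n × En n => u z * ((inner ℝ z.2 (v z) : ℝ) / ‖z.2‖ ^ β))
      ((volume : Measure (En n)).prod volume) := by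
    simp only [div_eq_mul_inv]
    exact hu.mul ((AEStronglyMeasurable.inner measurable_snd.aestronglyMeasurable hv).mul
      (Measurable.aestronglyMeasurable (by fun_prop)))
  refine ⟨hmeas, ?_⟩
  rw [hasFiniteIntegral_def]
  calc ∫⁻ z, (‖u z * ((inner ℝ z.2 (v z) : ℝ) / ‖z.2‖ ^ β)‖₊ : ℝ≥0∞)
        ∂((volume : Measure (En n)).prod volume)
      = ∫⁻ h : En n, ∫⁻ x : En n,
          (‖u (x, h) * ((inner ℝ h (v (x, h)) : ℝ) / ‖h‖ ^ β)‖₊ : ℝ≥0∞) :=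
        lintegral_prod_symm _ hmeas.enorm
    _ ≤ ∫⁻ h : En n, C h / ENNReal.ofReal (‖h‖ ^ γ) := ?_
    _ < ∞ := hfin
  refine lintegral_mono fun h => ?_
  by_cases hh : h = 0
  · subst hh
    have hz : ∀ x : En n,
        (‖u (x, (0 : En n)) * ((inner ℝ (0 : En n) (v (x, 0)) : ℝ) / ‖(0 : En n)‖ ^ β)‖₊ : ℝ≥0∞)
          = 0 := by
      intro x; simp
    rw [lintegral_congr hz, lintegral_zero]
    exact zero_le
  · have hpos : 0 < ‖h‖ ^ γ := Real.rpow_pos_of_pos (norm_pos_iff.mpr hh) γ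
    have hne : (ENNReal.ofReal (‖h‖ ^ γ))⁻¹ ≠ ∞ := by
      simp [ENNReal.inv_ne_top, (ENNReal.ofReal_pos.mpr hpos).ne']
    calc ∫⁻ x : En n, (‖u (x, h) * ((inner ℝ h (v (x, h)) : ℝ) / ‖h‖ ^ β)‖₊ : ℝ≥0∞)
        ≤ ∫⁻ x : En n, ((‖u (x, h)‖₊ : ℝ≥0∞) * ‖v (x, h)‖₊) * (ENNReal.ofReal (‖h‖ ^ γ))⁻¹ :=
          lintegral_mono fun x => by
            rw [← div_eq_mul_inv]
            exact aux_nnnorm_bound hβ hγ _ _ _ hh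
      _ = (∫⁻ x : En n, (‖u (x, h)‖₊ : ℝ≥0∞) * ‖v (x, h)‖₊) * (ENNReal.ofReal (‖h‖ ^ γ))⁻¹ :=
          lintegral_mul_const' _ _ hne
      _ ≤ C h * (ENNReal.ofReal (‖h‖ ^ γ))⁻¹ := by gcongr; exact hC h
      _ = C h / ENNReal.ofReal (‖h‖ ^ γ) := (div_eq_mul_inv _ _).symm

lemma aux_weight_memLp (q : ℝ≥0∞) (hq : 1 ≤ q) :
    MemLp (fun x : En n => (1 + ‖x‖) ^ (-((n : ℝ) + 1))) q volume := by
  have hcont : Continuous fun x : En n => (1 + ‖x‖) ^ (-((n : ℝ) + 1)) := by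
    apply Continuous.rpow_const (by continuity)
    intro x
    left
    positivity
  have hb : ∀ x : En n, ‖(1 + ‖x‖) ^ (-((n : ℝ) + 1))‖ ≤ 1 := by
    intro x
    rw [Real.norm_eq_abs, abs_of_nonneg (by positivity)]
    apply Real.rpow_le_one_of_one_le_of_nonpos
    · linarith [norm_nonneg x]
    · have : (0:ℝ) ≤ (n : ℝ) + 1 := by positivity
      linarith
  rcases eq_or_ne q ∞ with rfl | hq'
  · exact memLp_top_of_bound hcont.aestronglyMeasurable 1 (Filter.Eventually.of_forall hb)
  · have hq0 : q ≠ 0 := (zero_lt_one.trans_le hq).ne'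
    have ht : 1 ≤ q.toReal := by
      have := ENNReal.toReal_mono hq' hq
      simpa using this
    refine ⟨hcont.aestronglyMeasurable, ?_⟩
    rw [eLpNorm_eq_lintegral_rpow_enorm_toReal hq0 hq']
    apply ENNReal.rpow_lt_top_of_nonneg (by positivity)
    have hint : Integrable (fun x : En n => (1 + ‖x‖) ^ (-(((n : ℝ) + 1) * q.toReal))) volume := by
      apply integrable_one_add_norm
      rw [finrank_euclideanSpace_fin]
      nlinarith [ht]
    have heq : ∀ x : En n, ((‖(1 + ‖x‖) ^ (-((n : ℝ) + 1))‖ₑ : ℝ≥0∞)) ^ q.toReal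
        = ENNReal.ofReal ((1 + ‖x‖) ^ (-(((n : ℝ) + 1) * q.toReal))) := by
      intro x
      have h1 : (0:ℝ) ≤ (1 + ‖x‖) ^ (-((n : ℝ) + 1)) := by positivity
      rw [Real.enorm_eq_ofReal h1, ENNReal.ofReal_rpow_of_nonneg h1 ENNReal.toReal_nonneg,
        ← Real.rpow_mul (by positivity : (0:ℝ) ≤ 1 + ‖x‖), neg_mul]
    rw [lintegral_congr heq]
    exact hint.lintegral_lt_top.ne

lemma aux_ae_integrable_V (α : ℝ) (hα : 0 < α) {p q : ℝ≥0∞} (hq : 1 ≤ q)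
    (hpq : 1 / p + 1 / q = 1) {f : En n → ℝ}
    (hf : MemLp f p volume) (hfB : besov n α p 1 f < ∞) :
    ∀ᵐ x : En n, Integrable
      (fun h : En n => (‖h‖ ^ ((n : ℝ) + α + 1))⁻¹ • ((f (x + h) - f x) • h)) volume := by
  have hγ : (0:ℝ) < (n : ℝ) + α := by positivity
  have hβ : (n : ℝ) + α + 1 = ((n : ℝ) + α) + 1 := rfl
  have hpq' : 1 / q + 1 / p = 1 := by rw [add_comm]; exact hpq
  -- measurable representative
  set g : En n → ℝ := hf.1.mk f with hgdef
  have hgm : StronglyMeasurable g := hf.1.stronglyMeasurable_mk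
  have hfg : f =ᵐ[volume] g := hf.1.ae_eq_mk
  have hnull : (volume : Measure (En n)) {y : En n | ¬ f y = g y} = 0 := ae_iff.mp hfg
  have hsnd : ((volume : Measure (En n)).prod volume) {z : En n × En n | ¬ f z.2 = g z.2} = 0 :=
    MeasureTheory.Measure.QuasiMeasurePreserving.preimage_null
      MeasureTheory.Measure.quasiMeasurePreserving_snd hnull
  have hmain : ((volume : Measure (En n)).prod volume)
      {z : En n × En n | ¬ f (z.1 + z.2) = g (z.1 + z.2)} = 0 :=
    (measurePreserving_prod_add volume volume).quasiMeasurePreserving.preimage_null hsnd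
  have hshift : ∀ᵐ x : En n, ∀ᵐ h : En n, f (x + h) = g (x + h) :=
    MeasureTheory.Measure.ae_ae_of_ae_prod (ae_iff.mpr hmain)
  -- the nonnegative kernel and its measurability
  set G : En n → ℝ≥0∞ := fun x => ∫⁻ h : En n,
    (‖g (x + h) - g x‖₊ : ℝ≥0∞) / ENNReal.ofReal (‖h‖ ^ ((n : ℝ) + α)) with hGdef
  have hker : Measurable (fun z : En n × En n =>
      (‖g (z.1 + z.2) - g z.1‖₊ : ℝ≥0∞) / ENNReal.ofReal (‖z.2‖ ^ ((n : ℝ) + α))) := by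
    apply Measurable.div
    · exact ((hgm.measurable.comp (measurable_fst.add measurable_snd)).sub
        (hgm.measurable.comp measurable_fst)).nnnorm.coe_nnreal_ennreal
    · fun_prop
  have hGmeas : Measurable G := hker.lintegral_prod_right'
  -- the weight
  set w : En n → ℝ := fun x => (1 + ‖x‖) ^ (-((n : ℝ) + 1)) with hwdef
  have hwpos : ∀ x : En n, 0 < w x := fun x => Real.rpow_pos_of_pos (by positivity) _
  have hw : MemLp w q volume := aux_weight_memLp q hq
  -- difference seminorms of `g` agree with those of `f`
  have hEeq : ∀ h : En n, eLpNorm (fun x => g (x + h) - g x) p volume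
      = eLpNorm (fun x => f (x + h) - f x) p volume := by
    intro h
    apply eLpNorm_congr_ae
    have h1 : (fun x : En n => f (x + h)) =ᵐ[volume] fun x => g (x + h) :=
      (measurePreserving_add_right volume h).quasiMeasurePreserving.ae_eq hfg
    exact (h1.sub hfg).symm
  have hgaesm : ∀ h : En n,
      AEStronglyMeasurable (fun x : En n => g (x + h) - g x) volume := by
    intro h
    exact ((hgm.measurable.comp (measurable_add_const h)).sub hgm.measurable).aestronglyMeasurable
  -- the key finiteness claim
  have claim : (∫⁻ x : En n, ENNReal.ofReal (w x) * G x) < ∞ := by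
    have h1 : ∀ x : En n, ENNReal.ofReal (w x) * G x
        = ∫⁻ h : En n, ENNReal.ofReal (w x) *
            ((‖g (x + h) - g x‖₊ : ℝ≥0∞) / ENNReal.ofReal (‖h‖ ^ ((n : ℝ) + α))) :=
      fun x => (lintegral_const_mul' _ _ ENNReal.ofReal_ne_top).symm
    have hFm : Measurable (fun z : En n × En n => ENNReal.ofReal (w z.1) *
        ((‖g (z.1 + z.2) - g z.1‖₊ : ℝ≥0∞) / ENNReal.ofReal (‖z.2‖ ^ ((n : ℝ) + α)))) := by
      apply Measurable.mul _ hker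
      fun_prop
    have hswap : (∫⁻ x : En n, ENNReal.ofReal (w x) * G x)
        = ∫⁻ h : En n, ∫⁻ x : En n, ENNReal.ofReal (w x) *
            ((‖g (x + h) - g x‖₊ : ℝ≥0∞) / ENNReal.ofReal (‖h‖ ^ ((n : ℝ) + α))) := by
      rw [lintegral_congr h1]
      exact MeasureTheory.lintegral_lintegral_swap hFm.aemeasurable
    rw [hswap]
    have hbound : ∀ h : En n, (∫⁻ x : En n, ENNReal.ofReal (w x) *
        ((‖g (x + h) - g x‖₊ : ℝ≥0∞) / ENNReal.ofReal (‖h‖ ^ ((n : ℝ) + α))))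
        ≤ (eLpNorm w q volume * eLpNorm (fun x => g (x + h) - g x) p volume)
            / ENNReal.ofReal (‖h‖ ^ ((n : ℝ) + α)) := by
      intro h
      by_cases hh : h = 0
      · subst hh
        have hz : ∀ x : En n, ENNReal.ofReal (w x) *
            ((‖g (x + (0 : En n)) - g x‖₊ : ℝ≥0∞)
              / ENNReal.ofReal (‖(0 : En n)‖ ^ ((n : ℝ) + α))) = 0 := by
          intro x; simp
        rw [lintegral_congr hz, lintegral_zero]
        exact zero_le
      · have hpos : 0 < ‖h‖ ^ ((n : ℝ) + α) :=
          Real.rpow_pos_of_pos (norm_pos_iff.mpr hh) _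
        have hne : (ENNReal.ofReal (‖h‖ ^ ((n : ℝ) + α)))⁻¹ ≠ ∞ := by
          simp [ENNReal.inv_ne_top, (ENNReal.ofReal_pos.mpr hpos).ne']
        calc ∫⁻ x : En n, ENNReal.ofReal (w x) *
              ((‖g (x + h) - g x‖₊ : ℝ≥0∞) / ENNReal.ofReal (‖h‖ ^ ((n : ℝ) + α)))
            = ∫⁻ x : En n, (ENNReal.ofReal (w x) * (‖g (x + h) - g x‖₊ : ℝ≥0∞)) *
                (ENNReal.ofReal (‖h‖ ^ ((n : ℝ) + α)))⁻¹ := by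
              apply lintegral_congr fun x => ?_
              rw [div_eq_mul_inv, mul_assoc]
          _ = (∫⁻ x : En n, ENNReal.ofReal (w x) * (‖g (x + h) - g x‖₊ : ℝ≥0∞)) *
                (ENNReal.ofReal (‖h‖ ^ ((n : ℝ) + α)))⁻¹ := lintegral_mul_const' _ _ hne
          _ ≤ (eLpNorm w q volume * eLpNorm (fun x => g (x + h) - g x) p volume) *
                (ENNReal.ofReal (‖h‖ ^ ((n : ℝ) + α)))⁻¹ := by
              gcongr
              have heqw : ∀ x : En n, ENNReal.ofReal (w x) * (‖g (x + h) - g x‖₊ : ℝ≥0∞)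
                  = (‖w x‖₊ : ℝ≥0∞) * (‖g (x + h) - g x‖₊ : ℝ≥0∞) := by
                intro x; rw [← enorm_eq_nnnorm (w x), Real.enorm_eq_ofReal (hwpos x).le]
              rw [lintegral_congr heqw]
              exact aux_lintegral_holder hpq' hw.1 (hgaesm h)
          _ = (eLpNorm w q volume * eLpNorm (fun x => g (x + h) - g x) p volume) /
                ENNReal.ofReal (‖h‖ ^ ((n : ℝ) + α)) := (div_eq_mul_inv _ _).symm
    calc (∫⁻ h : En n, ∫⁻ x : En n, ENNReal.ofReal (w x) *
            ((‖g (x + h) - g x‖₊ : ℝ≥0∞) / ENNReal.ofReal (‖h‖ ^ ((n : ℝ) + α))))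
        ≤ ∫⁻ h : En n, (eLpNorm w q volume * eLpNorm (fun x => g (x + h) - g x) p volume)
            / ENNReal.ofReal (‖h‖ ^ ((n : ℝ) + α)) := lintegral_mono hbound
      _ = eLpNorm w q volume * ∫⁻ h : En n,
            eLpNorm (fun x => f (x + h) - f x) p volume
              / ENNReal.ofReal (‖h‖ ^ ((n : ℝ) + α)) := by
          simp_rw [mul_div_assoc, hEeq]
          exact lintegral_const_mul' _ _ hw.2.ne
      _ = eLpNorm w q volume * besov n α p 1 f := by rw [aux_besov_one]
      _ < ∞ := ENNReal.mul_lt_top hw.2 hfB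
  have hae : ∀ᵐ x : En n, ENNReal.ofReal (w x) * G x < ∞ :=
    ae_lt_top (by fun_prop) claim.ne
  have hGlt : ∀ᵐ x : En n, G x < ∞ := by
    filter_upwards [hae] with x hx
    by_contra hG
    rw [not_lt, top_le_iff] at hG
    rw [hG, ENNReal.mul_top (ENNReal.ofReal_pos.mpr (hwpos x)).ne'] at hx
    exact absurd hx (lt_irrefl _)
  filter_upwards [hGlt, hfg, hshift] with x hGx hfx hsx
  constructor
  · have T : AEStronglyMeasurable (fun h : En n => f (x + h)) volume :=
      hf.1.comp_quasiMeasurePreserving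
        (measurePreserving_add_left volume x).quasiMeasurePreserving
    exact (Measurable.aestronglyMeasurable (by fun_prop :
        Measurable (fun h : En n => (‖h‖ ^ ((n : ℝ) + α + 1))⁻¹))).smul
      ((T.sub aestronglyMeasurable_const).smul aestronglyMeasurable_id)
  · rw [hasFiniteIntegral_def]
    have hb : ∀ h : En n,
        (‖(‖h‖ ^ ((n : ℝ) + α + 1))⁻¹ • ((f (x + h) - f x) • h)‖₊ : ℝ≥0∞)
          ≤ (‖f (x + h) - f x‖₊ : ℝ≥0∞) / ENNReal.ofReal (‖h‖ ^ ((n : ℝ) + α)) := by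
      intro h
      by_cases hh : h = 0
      · subst hh; simp
      · have hpos : 0 < ‖h‖ ^ ((n : ℝ) + α) :=
          Real.rpow_pos_of_pos (norm_pos_iff.mpr hh) _
        calc (‖(‖h‖ ^ ((n : ℝ) + α + 1))⁻¹ • ((f (x + h) - f x) • h)‖₊ : ℝ≥0∞)
            = ENNReal.ofReal ‖(‖h‖ ^ ((n : ℝ) + α + 1))⁻¹ • ((f (x + h) - f x) • h)‖ :=
              (ofReal_norm_eq_enorm _).symm
          _ ≤ ENNReal.ofReal (|f (x + h) - f x| / ‖h‖ ^ ((n : ℝ) + α)) :=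
              ENNReal.ofReal_le_ofReal (aux_norm_V_le hβ hγ h _)
          _ = (‖f (x + h) - f x‖₊ : ℝ≥0∞) / ENNReal.ofReal (‖h‖ ^ ((n : ℝ) + α)) := by
              rw [ENNReal.ofReal_div_of_pos hpos, ← Real.enorm_eq_ofReal_abs, enorm_eq_nnnorm]
    calc ∫⁻ h : En n, (‖(‖h‖ ^ ((n : ℝ) + α + 1))⁻¹ • ((f (x + h) - f x) • h)‖₊ : ℝ≥0∞)
        ≤ ∫⁻ h : En n, (‖f (x + h) - f x‖₊ : ℝ≥0∞)
            / ENNReal.ofReal (‖h‖ ^ ((n : ℝ) + α)) := lintegral_mono hb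
      _ = G x := by
          apply lintegral_congr_ae
          filter_upwards [hsx] with h hh
          rw [hh, hfx]
      _ < ∞ := hGx

set_option maxHeartbeats 2000000 in
theorem statement5 (n : ℕ) (α : ℝ) (hα : α ∈ Set.Ioo (0 : ℝ) 1)
    (p q : ℝ≥0∞) (hp : 1 ≤ p) (hq : 1 ≤ q) (hpq : 1 / p + 1 / q = 1)
    (f : En n → ℝ) (φ : En n → En n)
    (hf : MemLp f p volume) (hfB : besov n α p 1 f < ∞)
    (hφ : MemLp φ q volume) (hφB : besov n α q 1 φ < ∞) :
    ∫ x, f x * fracDiv n α φ x = -∫ x, (inner ℝ (φ x) (fracGrad n α f x) : ℝ) := by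
  obtain ⟨hα0, hα1⟩ := hα
  have hγ : (0:ℝ) < (n : ℝ) + α := by positivity
  have hβ : (n : ℝ) + α + 1 = ((n : ℝ) + α) + 1 := rfl
  set μc : ℝ := muConst n α with hμc
  set A : En n → En n → ℝ := fun x h =>
    f x * ((inner ℝ h (φ (x + h) - φ x) : ℝ) / ‖h‖ ^ ((n : ℝ) + α + 1)) with hA
  set D : En n → En n → ℝ := fun x h =>
    (f (x + h) - f x) * ((inner ℝ h (φ x) : ℝ) / ‖h‖ ^ ((n : ℝ) + α + 1)) with hD
  set L : En n → ℝ := fun h =>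
    ∫ x : En n, (f (x + -h) - f x) * ((inner ℝ h (φ x) : ℝ) / ‖h‖ ^ ((n : ℝ) + α + 1)) with hL
  -- integrability of A on the product space
  have hIntA : Integrable (Function.uncurry A) ((volume : Measure (En n)).prod volume) := by
    apply aux_integrable_uncurry hβ hγ (fun z => f z.1) (fun z => φ (z.1 + z.2) - φ z.1)
      hf.1.comp_fst ((aux_aesm_shift hφ.1).sub hφ.1.comp_fst)
      (fun h => eLpNorm f p volume * eLpNorm (fun x => φ (x + h) - φ x) q volume)
    · intro h
      exact aux_lintegral_holder hpq hf.1 (((aux_memLp_shift hφ h).sub hφ).1)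
    · calc ∫⁻ h : En n, (eLpNorm f p volume * eLpNorm (fun x => φ (x + h) - φ x) q volume)
            / ENNReal.ofReal (‖h‖ ^ ((n : ℝ) + α))
          = eLpNorm f p volume * ∫⁻ h : En n, eLpNorm (fun x => φ (x + h) - φ x) q volume
              / ENNReal.ofReal (‖h‖ ^ ((n : ℝ) + α)) := by
            simp_rw [mul_div_assoc]
            exact lintegral_const_mul' _ _ hf.2.ne
        _ = eLpNorm f p volume * besov n α q 1 φ := by rw [aux_besov_one]
        _ < ∞ := ENNReal.mul_lt_top hf.2 hφB
  -- integrability of D on the product space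
  have hIntD : Integrable (Function.uncurry D) ((volume : Measure (En n)).prod volume) := by
    apply aux_integrable_uncurry hβ hγ (fun z => f (z.1 + z.2) - f z.1) (fun z => φ z.1)
      ((aux_aesm_shift hf.1).sub hf.1.comp_fst) hφ.1.comp_fst
      (fun h => eLpNorm φ q volume * eLpNorm (fun x => f (x + h) - f x) p volume)
    · intro h
      have := aux_lintegral_holder hpq (((aux_memLp_shift hf h).sub hf).1) hφ.1
      rw [mul_comm (eLpNorm φ q volume)]
      exact this
    · calc ∫⁻ h : En n, (eLpNorm φ q volume * eLpNorm (fun x => f (x + h) - f x) p volume)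
            / ENNReal.ofReal (‖h‖ ^ ((n : ℝ) + α))
          = eLpNorm φ q volume * ∫⁻ h : En n, eLpNorm (fun x => f (x + h) - f x) p volume
              / ENNReal.ofReal (‖h‖ ^ ((n : ℝ) + α)) := by
            simp_rw [mul_div_assoc]
            exact lintegral_const_mul' _ _ hφ.2.ne
        _ = eLpNorm φ q volume * besov n α p 1 f := by rw [aux_besov_one]
        _ < ∞ := ENNReal.mul_lt_top hφ.2 hfB
  -- pointwise rewriting of `f x * fracDiv`
  have key1 : ∀ x : En n, f x * fracDiv n α φ x = μc * ∫ h : En n, A x h := by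
    intro x
    simp only [fracDiv, ← hμc]
    have ht : (∫ y : En n, (inner ℝ (y - x) (φ y - φ x) : ℝ) / ‖y - x‖ ^ ((n : ℝ) + α + 1))
        = ∫ h : En n, (inner ℝ h (φ (x + h) - φ x) : ℝ) / ‖h‖ ^ ((n : ℝ) + α + 1) := by
      rw [← MeasureTheory.integral_add_left_eq_self
        (fun y : En n => (inner ℝ (y - x) (φ y - φ x) : ℝ) / ‖y - x‖ ^ ((n : ℝ) + α + 1)) x]
      simp only [add_sub_cancel_left]
    rw [ht, hA]
    simp only []
    rw [MeasureTheory.integral_const_mul]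
    ring
  have step1 : ∫ x : En n, f x * fracDiv n α φ x = μc * ∫ x : En n, ∫ h : En n, A x h := by
    simp_rw [key1]
    rw [MeasureTheory.integral_const_mul]
  -- per-h splitting and translation
  have hsplit : ∀ h : En n, (∫ x : En n, A x h) = L h := by
    intro h
    have i1 : Integrable (fun x : En n => f x • φ (x + h)) volume :=
      aux_integrable_holder hpq hf (aux_memLp_shift hφ h)
    have i2 : Integrable (fun x : En n => f x • φ x) volume := aux_integrable_holder hpq hf hφ
    have i3 : Integrable (fun x : En n => f (x + -h) • φ x) volume :=
      aux_integrable_holder hpq (aux_memLp_shift hf (-h)) hφ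
    have e1 : ∀ x : En n, A x h
        = (inner ℝ h (f x • φ (x + h)) : ℝ) / ‖h‖ ^ ((n : ℝ) + α + 1)
          - (inner ℝ h (f x • φ x) : ℝ) / ‖h‖ ^ ((n : ℝ) + α + 1) := by
      intro x
      simp only [hA, real_inner_smul_right, inner_sub_right]
      ring
    rw [integral_congr_ae (Filter.Eventually.of_forall e1),
      integral_sub ((i1.const_inner h).div_const _) ((i2.const_inner h).div_const _)]
    have e2 : (∫ x : En n, (inner ℝ h (f x • φ (x + h)) : ℝ) / ‖h‖ ^ ((n : ℝ) + α + 1))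
        = ∫ x : En n, (inner ℝ h (f (x + -h) • φ x) : ℝ) / ‖h‖ ^ ((n : ℝ) + α + 1) := by
      rw [← MeasureTheory.integral_add_right_eq_self
        (fun x : En n => (inner ℝ h (f (x + -h) • φ x) : ℝ) / ‖h‖ ^ ((n : ℝ) + α + 1)) h]
      simp only [add_neg_cancel_right]
    rw [e2, ← integral_sub ((i3.const_inner h).div_const _) ((i2.const_inner h).div_const _)]
    apply integral_congr_ae (Filter.Eventually.of_forall fun x => ?_)
    simp only [hL, real_inner_smul_right]
    ring
  -- negation change of variables
  have hneg : ∫ h : En n, L h = ∫ h : En n, L (-h) := (integral_neg_eq_self L volume).symm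
  have hLneg : ∀ h : En n, L (-h) = -∫ x : En n, D x h := by
    intro h
    have e3 : ∀ x : En n, (f (x + - -h) - f x) * ((inner ℝ (-h) (φ x) : ℝ) / ‖-h‖ ^ ((n : ℝ) + α + 1))
        = -D x h := by
      intro x
      simp only [hD, neg_neg, inner_neg_left, norm_neg]
      ring
    calc L (-h) = ∫ x : En n, -D x h := integral_congr_ae (Filter.Eventually.of_forall e3)
      _ = -∫ x : En n, D x h := integral_neg _
  -- a.e. identification with the fractional gradient
  have hkey : ∀ᵐ x : En n ∂(volume : Measure (En n)),
      (inner ℝ (φ x) (fracGrad n α f x) : ℝ) = μc * ∫ h : En n, D x h := by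
    filter_upwards [aux_ae_integrable_V α hα0 hq hpq hf hfB] with x hVx
    have htr : fracGrad n α f x
        = μc • ∫ h : En n, (‖h‖ ^ ((n : ℝ) + α + 1))⁻¹ • ((f (x + h) - f x) • h) := by
      simp only [fracGrad, ← hμc]
      congr 1
      rw [← MeasureTheory.integral_add_left_eq_self
        (fun y : En n => (‖y - x‖ ^ ((n : ℝ) + α + 1))⁻¹ • ((f y - f x) • (y - x))) x]
      simp only [add_sub_cancel_left]
    rw [htr, real_inner_smul_right, ← integral_inner hVx (φ x)]
    congr 1
    apply integral_congr_ae (Filter.Eventually.of_forall fun h => ?_)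
    simp only [real_inner_smul_right, hD]
    rw [real_inner_comm (φ x) h]
    ring
  -- assembling everything
  calc ∫ x, f x * fracDiv n α φ x
      = μc * ∫ x : En n, ∫ h : En n, A x h := step1
    _ = μc * ∫ h : En n, ∫ x : En n, A x h := by rw [integral_integral_swap hIntA]
    _ = μc * ∫ h : En n, L h := by
        rw [integral_congr_ae (Filter.Eventually.of_forall hsplit)]
    _ = μc * ∫ h : En n, L (-h) := by rw [hneg]
    _ = μc * ∫ h : En n, -∫ x : En n, D x h := by
        rw [integral_congr_ae (Filter.Eventually.of_forall hLneg)]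
    _ = -(μc * ∫ h : En n, ∫ x : En n, D x h) := by rw [integral_neg]; ring
    _ = -(μc * ∫ x : En n, ∫ h : En n, D x h) := by rw [integral_integral_swap hIntD]
    _ = -∫ x : En n, μc * ∫ h : En n, D x h := by rw [MeasureTheory.integral_const_mul]
    _ = -∫ x, (inner ℝ (φ x) (fracGrad n α f x) : ℝ) := by rw [integral_congr_ae hkey]
end AuxIBP
end

section
/- Let α ∈ (0,1) and let p, q, r ∈ [1,+∞] with 1/p + 1/q = 1/r. If f ∈ B^α_{p,1}(ℝ^n) and g ∈ B^α_{q,1}(ℝ^n), then the Leibniz rule ∇^α(fg) = g ∇^α f + f ∇^α g + ∇^α_{NL}(f,g) holds in L^r(ℝ^n;ℝ^n), where ∇^α_{NL}(f,g)(x) = μ_{n,α} ∫_{ℝ^n} (y-x)(f(y)-f(x))(g(y)-g(x)) / |y-x|^{n+α+1} dy. -/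
open MeasureTheory Metric
open scoped ENNReal NNReal

namespace FracAux
open Filter Function

variable {X Y : Type*} [MeasurableSpace X] [MeasurableSpace Y] {μ : Measure X} {ν : Measure Y}
variable {e : ℝ≥0∞} {Φ Ψ : X → ℝ≥0∞}

noncomputable def eN (e : ℝ≥0∞) (Φ : X → ℝ≥0∞) (μ : Measure X) : ℝ≥0∞ :=
  if e = ∞ then essSup Φ μ else (∫⁻ x, Φ x ^ e.toReal ∂μ) ^ (1 / e.toReal)

lemma ofReal_norm_eq_coe_nnnorm {E : Type*} [SeminormedAddCommGroup E] (a : E) :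
    ENNReal.ofReal ‖a‖ = (‖a‖₊ : ℝ≥0∞) := ENNReal.ofReal_eq_coe_nnreal _

lemma eN_top (Φ : X → ℝ≥0∞) : eN ∞ Φ μ = essSup Φ μ := if_pos rfl

lemma eN_of_ne_top (he : e ≠ ∞) (Φ : X → ℝ≥0∞) :
    eN e Φ μ = (∫⁻ x, Φ x ^ e.toReal ∂μ) ^ (1 / e.toReal) := if_neg he

lemma one_le_toReal (he : 1 ≤ e) (he' : e ≠ ∞) : 1 ≤ e.toReal := by
  simpa using ENNReal.toReal_mono he' he

lemma toReal_pos' (he : 1 ≤ e) (he' : e ≠ ∞) : 0 < e.toReal :=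
  lt_of_lt_of_le one_pos (one_le_toReal he he')

lemma eN_mono (h : Φ ≤ᵐ[μ] Ψ) : eN e Φ μ ≤ eN e Ψ μ := by
  unfold eN; split
  · exact essSup_mono_ae h
  · refine ENNReal.rpow_le_rpow (lintegral_mono_ae ?_) (by positivity)
    exact h.mono fun x hx => ENNReal.rpow_le_rpow hx ENNReal.toReal_nonneg

lemma eN_congr_ae (h : Φ =ᵐ[μ] Ψ) : eN e Φ μ = eN e Ψ μ :=
  le_antisymm (eN_mono h.le) (eN_mono h.symm.le)

lemma eLpNorm_eq_eN {F : Type*} [NormedAddCommGroup F] (he : e ≠ 0) (u : X → F) :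
    eLpNorm u e μ = eN e (fun x => (‖u x‖₊ : ℝ≥0∞)) μ := by
  rcases eq_or_ne e ∞ with rfl | he'
  · rw [eLpNorm_exponent_top, eN_top]; rfl
  · exact (eLpNorm_eq_lintegral_rpow_enorm_toReal he he').trans (eN_of_ne_top he' _).symm

lemma eN_mul_const (he : 1 ≤ e) {c : ℝ≥0∞} (hc : c ≠ ∞) :
    eN e (fun x => Φ x * c) μ ≤ eN e Φ μ * c := by
  rcases eq_or_ne e ∞ with rfl | he'
  · rw [eN_top, eN_top]
    refine essSup_le_of_ae_le _ ((ae_le_essSup (f := Φ)).mono fun x hx => ?_)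
    exact mul_le_mul_left hx c
  · have hs : 0 < e.toReal := toReal_pos' he he'
    rw [eN_of_ne_top he', eN_of_ne_top he']
    have h1 : ∀ x, (Φ x * c) ^ e.toReal = Φ x ^ e.toReal * c ^ e.toReal := fun x =>
      ENNReal.mul_rpow_of_nonneg _ _ hs.le
    simp_rw [h1]
    rw [lintegral_mul_const' _ _ (ENNReal.rpow_ne_top_of_nonneg hs.le hc),
      ENNReal.mul_rpow_of_nonneg _ _ (by positivity : (0:ℝ) ≤ 1 / e.toReal),
      ← ENNReal.rpow_mul, mul_one_div_cancel hs.ne', ENNReal.rpow_one]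

lemma eN_const_mul (he : 1 ≤ e) {c : ℝ≥0∞} (hc : c ≠ ∞) :
    eN e (fun x => c * Φ x) μ ≤ c * eN e Φ μ := by
  simp_rw [mul_comm c]
  exact eN_mul_const he hc

lemma eN_add_le (he : 1 ≤ e) (hΦ : AEMeasurable Φ μ) (hΨ : AEMeasurable Ψ μ) :
    eN e (fun x => Φ x + Ψ x) μ ≤ eN e Φ μ + eN e Ψ μ := by
  rcases eq_or_ne e ∞ with rfl | he'
  · rw [eN_top, eN_top, eN_top]
    refine essSup_le_of_ae_le _ ?_
    filter_upwards [ae_le_essSup (f := Φ) (μ := μ), ae_le_essSup (f := Ψ) (μ := μ)] with x h1 h2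
    exact add_le_add h1 h2
  · rw [eN_of_ne_top he', eN_of_ne_top he', eN_of_ne_top he']
    exact ENNReal.lintegral_Lp_add_le hΦ hΨ (one_le_toReal he he')

lemma eN_ae_lt_top (he : 1 ≤ e) (hΦ : AEMeasurable Φ μ) (h : eN e Φ μ ≠ ∞) :
    ∀ᵐ x ∂μ, Φ x < ∞ := by
  rcases eq_or_ne e ∞ with rfl | he'
  · rw [eN_top] at h
    exact (ae_le_essSup (f := Φ)).mono fun x hx => lt_of_le_of_lt hx h.lt_top
  · have hs : 0 < e.toReal := toReal_pos' he he'
    rw [eN_of_ne_top he'] at h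
    have h2 : ∫⁻ x, Φ x ^ e.toReal ∂μ ≠ ∞ := by
      intro hcon
      rw [hcon, ENNReal.top_rpow_of_pos (by positivity)] at h
      exact h rfl
    have := ae_lt_top' (hΦ.pow_const _) h2
    exact this.mono fun x hx => by
      rw [← ENNReal.rpow_lt_top_iff_of_pos hs]; exact hx

lemma essSup_eq_iSup_rat (g : X → ℝ≥0∞) (μ : Measure X) :
    essSup g μ = ⨆ q : ℚ,
      ({q' : ℚ | μ {x | ENNReal.ofReal q' < g x} ≠ 0}).indicator
        (fun q' => ENNReal.ofReal q') q := by
  set S := ⨆ q : ℚ, ({q' : ℚ | μ {x | ENNReal.ofReal q' < g x} ≠ 0}).indicator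
      (fun q' => ENNReal.ofReal q') q with hS
  refine le_antisymm ?_ (iSup_le fun q => ?_)
  · refine essSup_le_of_ae_le _ ?_
    have hsub : {x | S < g x} ⊆
        ⋃ (q : ℚ) (_ : μ {x | ENNReal.ofReal q < g x} = 0), {x | ENNReal.ofReal q < g x} := by
      intro x hx
      have hx' : S < g x := hx
      obtain ⟨q, hq0, hq1, hq2⟩ := (ENNReal.lt_iff_exists_rat_btwn).mp hx'
      have hofReal : (Real.toNNReal (q:ℝ) : ℝ≥0∞) = ENNReal.ofReal q := rfl
      rw [hofReal] at hq1 hq2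
      have hnull : μ {x | ENNReal.ofReal q < g x} = 0 := by
        by_contra hne
        have : ENNReal.ofReal q ≤ S := by
          refine le_trans ?_ (le_iSup _ q)
          rw [Set.indicator_of_mem (by exact hne)]
        exact absurd (lt_of_le_of_lt this hq1) (lt_irrefl _)
      exact Set.mem_iUnion.mpr ⟨q, Set.mem_iUnion.mpr ⟨hnull, hq2⟩⟩
    have hnull : μ {x | S < g x} = 0 :=
      measure_mono_null hsub (measure_iUnion_null fun q => measure_iUnion_null fun hq => hq)
    change ∀ᵐ x ∂μ, g x ≤ S
    rw [ae_iff]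
    simpa [not_le] using hnull
  · by_cases hq : μ {x | ENNReal.ofReal (q:ℝ) < g x} = 0
    · rw [Set.indicator_of_notMem (by simpa using hq)]
      exact zero_le
    · rw [Set.indicator_of_mem (by exact hq)]
      refine le_of_not_gt fun hlt => hq ?_
      have hae : μ {x | ¬ g x ≤ essSup g μ} = 0 := ae_iff.mp (ae_le_essSup (f := g))
      refine measure_mono_null (fun x hx => ?_) hae
      simp only [Set.mem_setOf_eq, not_le] at *
      exact hlt.trans hx

lemma measurable_essSup_right [SFinite μ] {A : X → Y → ℝ≥0∞}
    (hA : Measurable (uncurry A)) : Measurable fun y => essSup (fun x => A x y) μ := by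
  have hrw : (fun y => essSup (fun x => A x y) μ) = fun y => ⨆ q : ℚ,
      ({y' | μ {x | ENNReal.ofReal q < A x y'} ≠ 0}).indicator (fun _ => ENNReal.ofReal q) y := by
    funext y
    rw [essSup_eq_iSup_rat]
    refine iSup_congr fun q => ?_
    by_cases hq : μ {x | ENNReal.ofReal q < A x y} = 0
    · rw [Set.indicator_of_notMem (by simpa using hq), Set.indicator_of_notMem (by simpa using hq)]
    · rw [Set.indicator_of_mem (by exact hq), Set.indicator_of_mem (by exact hq)]
  rw [hrw]
  refine Measurable.iSup fun q => ?_
  have hset : MeasurableSet {p : X × Y | ENNReal.ofReal q < uncurry A p} :=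
    measurableSet_lt measurable_const hA
  have hm : Measurable fun y => μ ((fun x => (x, y)) ⁻¹' {p : X × Y | ENNReal.ofReal q < uncurry A p}) :=
    measurable_measure_prodMk_right hset
  have hsect : {y | μ {x | ENNReal.ofReal q < A x y} ≠ 0} =
      (fun y => μ ((fun x => (x, y)) ⁻¹' {p : X × Y | ENNReal.ofReal q < uncurry A p})) ⁻¹' {0}ᶜ := by
    rfl
  refine Measurable.indicator measurable_const ?_
  rw [hsect]
  exact hm (measurableSet_singleton 0).compl

lemma essSup_lintegral_le [SFinite μ] [SFinite ν] {A : X → Y → ℝ≥0∞}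
    (hA : Measurable (uncurry A)) :
    essSup (fun x => ∫⁻ y, A x y ∂ν) μ ≤ ∫⁻ y, essSup (fun x => A x y) μ ∂ν := by
  set B := fun y => essSup (fun x => A x y) μ with hB
  have hBm : Measurable B := measurable_essSup_right hA
  have hU : MeasurableSet {p : X × Y | B p.2 < uncurry A p} :=
    measurableSet_lt (hBm.comp measurable_snd) hA
  have hnull : (μ.prod ν) {p : X × Y | B p.2 < uncurry A p} = 0 := by
    rw [Measure.prod_apply_symm hU]
    have hsec : ∀ y, μ {a | B y < A a y} = 0 := by
      intro y
      have hae : μ {x | ¬ A x y ≤ B y} = 0 := ae_iff.mp (ae_le_essSup (f := fun x => A x y))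
      refine measure_mono_null (fun x hx => ?_) hae
      simp only [Set.mem_setOf_eq, not_le] at *
      exact hx
    have : ∀ y, μ ((fun x => (x, y)) ⁻¹' {p : X × Y | B p.2 < uncurry A p}) = 0 := fun y => hsec y
    simp only [this, lintegral_zero]
  have hae2 : ∀ᵐ z ∂(μ.prod ν), A z.1 z.2 ≤ B z.2 := by
    rw [ae_iff]
    simp only [not_le]; exact hnull
  have hae3 := Measure.ae_ae_of_ae_prod hae2
  refine essSup_le_of_ae_le _ (hae3.mono fun x hx => ?_)
  exact lintegral_mono_ae hx

lemma lintegral_lintegral_rpow_le [SigmaFinite μ] [SFinite ν] {A : X → Y → ℝ≥0∞}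
    (hA : Measurable (uncurry A)) {s : ℝ} (hs : 1 ≤ s) :
    (∫⁻ x, (∫⁻ y, A x y ∂ν) ^ s ∂μ) ^ (1/s) ≤ ∫⁻ y, (∫⁻ x, (A x y) ^ s ∂μ) ^ (1/s) ∂ν := by
  have hF : Measurable fun x => ∫⁻ y, A x y ∂ν := hA.lintegral_prod_right'
  set F := fun x => ∫⁻ y, A x y ∂ν with hFdef
  set M := ∫⁻ y, (∫⁻ x, (A x y) ^ s ∂μ) ^ (1/s) ∂ν with hM
  rcases eq_or_lt_of_le hs with rfl | hs1
  · rw [hM]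
    simp only [ENNReal.rpow_one, one_div, inv_one]
    exact le_of_eq (lintegral_lintegral_swap hA.aemeasurable)
  -- s > 1
  have hs0 : 0 < s := lt_trans one_pos hs1
  have hs10 : 0 < s - 1 := by linarith
  have hconj : (s / (s - 1)).HolderConjugate s := (Real.HolderConjugate.conjExponent hs1).symm
  set t := s / (s - 1) with ht
  have hts : (s - 1) * t = s := by
    rw [ht]; field_simp
  -- truncations
  set Fk : ℕ → X → ℝ≥0∞ := fun k => (spanningSets μ k).indicator (fun x => min (F x) k) with hFk
  have hFkm : ∀ k, Measurable (Fk k) := fun k =>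
    (hF.min measurable_const).indicator (measurableSet_spanningSets μ k)
  have hFkle : ∀ k x, Fk k x ≤ F x := by
    intro k x
    by_cases hx : x ∈ spanningSets μ k
    · rw [hFk]; simp only [Set.indicator_of_mem hx]; exact min_le_left _ _
    · rw [hFk]; simp only [Set.indicator_of_notMem hx]; exact zero_le
  have hFklt : ∀ k x, Fk k x ≤ (k : ℝ≥0∞) := by
    intro k x
    by_cases hx : x ∈ spanningSets μ k
    · rw [hFk]; simp only [Set.indicator_of_mem hx]; exact min_le_right _ _
    · rw [hFk]; simp only [Set.indicator_of_notMem hx]; exact zero_le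
  set Ak : ℕ → ℝ≥0∞ := fun k => ∫⁻ x, Fk k x ^ s ∂μ with hAk
  have hAkfin : ∀ k, Ak k ≠ ∞ := by
    intro k
    have hle : ∀ x, Fk k x ^ s ≤ (spanningSets μ k).indicator (fun _ => (k : ℝ≥0∞) ^ s) x := by
      intro x
      by_cases hx : x ∈ spanningSets μ k
      · rw [Set.indicator_of_mem hx]
        exact ENNReal.rpow_le_rpow (hFklt k x) hs0.le
      · rw [hFk]
        simp only [Set.indicator_of_notMem hx]
        rw [ENNReal.zero_rpow_of_pos hs0]
    refine ne_of_lt (lt_of_le_of_lt (lintegral_mono hle) ?_)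
    rw [lintegral_indicator_const (measurableSet_spanningSets μ k)]
    exact ENNReal.mul_lt_top
      (ENNReal.rpow_lt_top_of_nonneg hs0.le (ENNReal.natCast_ne_top k))
      (measure_spanningSets_lt_top μ k)
  -- main estimate : Ak k ≤ Ak k ^ (1/t) * M
  have hmain : ∀ k, Ak k ≤ Ak k ^ (1/t) * M := by
    intro k
    have hFkne : ∀ x, Fk k x ^ (s-1) ≠ ∞ := fun x =>
      ENNReal.rpow_ne_top_of_nonneg hs10.le (lt_of_le_of_lt (hFklt k x)
        (ENNReal.natCast_lt_top k)).ne
    have step1 : Ak k ≤ ∫⁻ x, Fk k x ^ (s-1) * F x ∂μ := by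
      refine lintegral_mono fun x => ?_
      have : Fk k x ^ s = Fk k x ^ (s - 1) * Fk k x ^ (1:ℝ) := by
        rw [← ENNReal.rpow_add_of_nonneg _ _ (by linarith) zero_le_one]
        norm_num
      rw [this, ENNReal.rpow_one]
      exact mul_le_mul_right (hFkle k x) _
    have step2 : ∫⁻ x, Fk k x ^ (s-1) * F x ∂μ = ∫⁻ y, ∫⁻ x, Fk k x ^ (s-1) * A x y ∂μ ∂ν := by
      have : ∀ x, Fk k x ^ (s-1) * F x = ∫⁻ y, Fk k x ^ (s-1) * A x y ∂ν := fun x =>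
        (lintegral_const_mul' _ _ (hFkne x)).symm
      calc ∫⁻ x, Fk k x ^ (s-1) * F x ∂μ
          = ∫⁻ x, ∫⁻ y, Fk k x ^ (s-1) * A x y ∂ν ∂μ := lintegral_congr this
        _ = ∫⁻ y, ∫⁻ x, Fk k x ^ (s-1) * A x y ∂μ ∂ν := lintegral_lintegral_swap
            ((((hFkm k).comp measurable_fst).pow_const _).mul hA).aemeasurable
    have step3 : ∀ y, ∫⁻ x, Fk k x ^ (s-1) * A x y ∂μ ≤
        Ak k ^ (1/t) * (∫⁻ x, (A x y) ^ s ∂μ) ^ (1/s) := by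
      intro y
      have hh := ENNReal.lintegral_mul_le_Lp_mul_Lq μ hconj
        (f := fun x => Fk k x ^ (s-1)) (g := fun x => A x y)
        (((hFkm k).pow_const _).aemeasurable)
        ((hA.comp (measurable_id.prodMk measurable_const)).aemeasurable)
      have heq : ∫⁻ x, (Fk k x ^ (s-1)) ^ t ∂μ = Ak k := by
        rw [hAk]
        exact lintegral_congr fun x => by rw [← ENNReal.rpow_mul, hts]
      calc ∫⁻ x, Fk k x ^ (s-1) * A x y ∂μ
          = ∫⁻ x, ((fun x => Fk k x ^ (s-1)) * fun x => A x y) x ∂μ := rfl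
        _ ≤ (∫⁻ x, (Fk k x ^ (s-1)) ^ t ∂μ) ^ (1/t) * (∫⁻ x, (A x y) ^ s ∂μ) ^ (1/s) := hh
        _ = Ak k ^ (1/t) * (∫⁻ x, (A x y) ^ s ∂μ) ^ (1/s) := by rw [heq]
    calc Ak k ≤ ∫⁻ y, ∫⁻ x, Fk k x ^ (s-1) * A x y ∂μ ∂ν := step2 ▸ step1
      _ ≤ ∫⁻ y, Ak k ^ (1/t) * (∫⁻ x, (A x y) ^ s ∂μ) ^ (1/s) ∂ν := lintegral_mono step3
      _ = Ak k ^ (1/t) * M := lintegral_const_mul' _ _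
          (ENNReal.rpow_ne_top_of_nonneg (by positivity) (hAkfin k))
  -- conclude Ak k ^ (1/s) ≤ M
  have hconc : ∀ k, Ak k ^ (1/s) ≤ M := by
    intro k
    rcases eq_or_ne (Ak k) 0 with h0 | h0
    · rw [h0, ENNReal.zero_rpow_of_pos (by positivity)]
      exact zero_le
    · have hsum : 1/s + 1/t = 1 := by
        rw [one_div, one_div]; exact hconj.symm.inv_add_inv_eq_one
      have hAkt : Ak k ^ (1/t) ≠ ∞ := ENNReal.rpow_ne_top_of_nonneg (by positivity) (hAkfin k)
      have hAkt0 : Ak k ^ (1/t) ≠ 0 := by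
        simp only [ne_eq, ENNReal.rpow_eq_zero_iff, not_or]
        constructor
        · rintro ⟨h, _⟩; exact h0 h
        · rintro ⟨h, _⟩; exact hAkfin k h
      have hsplit : Ak k = Ak k ^ (1/s) * Ak k ^ (1/t) := by
        rw [← ENNReal.rpow_add _ _ h0 (hAkfin k), hsum, ENNReal.rpow_one]
      have h2 : Ak k ^ (1/s) * Ak k ^ (1/t) ≤ M * Ak k ^ (1/t) := by
        rw [← hsplit, mul_comm]; exact hmain k
      rwa [ENNReal.mul_le_mul_iff_left hAkt0 hAkt] at h2
  -- monotone convergence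
  have hFkmono : Monotone Fk := by
    intro k l hkl x
    by_cases hx : x ∈ spanningSets μ k
    · have hx' : x ∈ spanningSets μ l := monotone_spanningSets μ hkl hx
      rw [hFk]
      simp only [Set.indicator_of_mem hx, Set.indicator_of_mem hx']
      exact min_le_min le_rfl (Nat.cast_le.mpr hkl)
    · rw [hFk]; simp only [Set.indicator_of_notMem hx]; exact zero_le
  have hFsup : ∀ x, (⨆ k, Fk k x ^ s) = F x ^ s := by
    intro x
    obtain ⟨K, hK⟩ : ∃ K, x ∈ spanningSets μ K := by
      have h1 := iUnion_spanningSets μ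
      have hx : x ∈ ⋃ i, spanningSets μ i := h1 ▸ Set.mem_univ x
      exact Set.mem_iUnion.mp hx
    have hsup1 : (⨆ k, Fk k x) = F x := by
      refine le_antisymm (iSup_le fun k => hFkle k x) (le_of_forall_lt fun c hc => ?_)
      obtain ⟨m, hm⟩ : ∃ m : ℕ, c < m := ENNReal.exists_nat_gt hc.ne_top
      have hmem : x ∈ spanningSets μ (max m K) :=
        monotone_spanningSets μ (le_max_right m K) hK
      have : c < Fk (max m K) x := by
        rw [hFk]
        simp only [Set.indicator_of_mem hmem, lt_min_iff]
        exact ⟨hc, lt_of_lt_of_le hm (by exact_mod_cast Nat.cast_le.mpr (le_max_left m K))⟩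
      exact lt_of_lt_of_le this (le_iSup (fun j => Fk j x) (max m K))
    rw [← hsup1]
    exact (Monotone.map_iSup_of_continuousAt (f := fun z : ℝ≥0∞ => z ^ s)
      (g := fun k => Fk k x) (ENNReal.continuous_rpow_const.continuousAt)
      (fun a b hab => ENNReal.rpow_le_rpow hab hs0.le)
      (ENNReal.zero_rpow_of_pos hs0)).symm
  have hkey : ∫⁻ x, F x ^ s ∂μ = ⨆ k, Ak k := by
    rw [hAk]
    rw [← lintegral_iSup (fun k => (hFkm k).pow_const _)
      (fun k l hkl x => ENNReal.rpow_le_rpow (hFkmono hkl x) hs0.le)]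
    exact lintegral_congr fun x => (hFsup x).symm
  have hfin : ∫⁻ x, F x ^ s ∂μ ≤ M ^ s := by
    rw [hkey]
    refine iSup_le fun k => ?_
    have h1 : (Ak k ^ (1/s)) ^ s ≤ M ^ s := ENNReal.rpow_le_rpow (hconc k) hs0.le
    rwa [← ENNReal.rpow_mul, one_div, inv_mul_cancel₀ hs0.ne', ENNReal.rpow_one] at h1
  calc (∫⁻ x, F x ^ s ∂μ) ^ (1/s) ≤ (M ^ s) ^ (1/s) := ENNReal.rpow_le_rpow hfin (by positivity)
    _ = M := by rw [← ENNReal.rpow_mul, mul_one_div_cancel hs0.ne', ENNReal.rpow_one]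

lemma eN_lintegral_le [SigmaFinite μ] [SFinite ν] {e : ℝ≥0∞} (he : 1 ≤ e)
    {A : X → Y → ℝ≥0∞} (hA : Measurable (uncurry A)) :
    eN e (fun x => ∫⁻ y, A x y ∂ν) μ ≤ ∫⁻ y, eN e (fun x => A x y) μ ∂ν := by
  rcases eq_or_ne e ∞ with rfl | he'
  · rw [eN_top]
    refine le_trans (essSup_lintegral_le hA) (le_of_eq ?_)
    exact lintegral_congr fun y => (eN_top _).symm
  · rw [eN_of_ne_top he']
    refine le_trans (lintegral_lintegral_rpow_le hA (one_le_toReal he he')) (le_of_eq ?_)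
    exact lintegral_congr fun y => (eN_of_ne_top he' _).symm


section Frac
open Filter Function

variable {n : ℕ} {α : ℝ}

noncomputable def ker (n : ℕ) (α : ℝ) (h : En n) : ℝ≥0∞ :=
  ((‖h‖₊ : ℝ≥0∞) ^ ((n:ℝ)+α))⁻¹

noncomputable def Phi (n : ℕ) (α : ℝ) (u : En n → ℝ) (x : En n) : ℝ≥0∞ :=
  ∫⁻ h, (‖u (x+h) - u x‖₊ : ℝ≥0∞) * ker n α h

noncomputable def PhiNL (n : ℕ) (α : ℝ) (f g : En n → ℝ) (x : En n) : ℝ≥0∞ :=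
  ∫⁻ h, (‖f (x+h) - f x‖₊ : ℝ≥0∞) * (‖g (x+h) - g x‖₊ : ℝ≥0∞) * ker n α h

noncomputable def PhiA (n : ℕ) (α : ℝ) (f g : En n → ℝ) (x : En n) : ℝ≥0∞ :=
  ∫⁻ h, (‖g (x+h)‖₊ : ℝ≥0∞) * (‖f (x+h) - f x‖₊ : ℝ≥0∞) * ker n α h

lemma measurable_ker : Measurable (ker n α) :=
  (measurable_nnnorm.coe_nnreal_ennreal.pow_const _).inv

lemma ker_ne_top (hna : 0 < (n:ℝ) + α) {h : En n} (hh : h ≠ 0) : ker n α h ≠ ∞ := by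
  rw [ker, ne_eq, ENNReal.inv_eq_top]
  simp only [ENNReal.rpow_eq_zero_iff, not_or, not_and]
  constructor
  · intro hc
    exact absurd hc (by simpa using hh)
  · intro hc
    exact absurd hc ENNReal.coe_ne_top

lemma noAtoms_volume (hn : 0 < n) : NullSingletonClass (volume : Measure (En n)) := by
  haveI : Nontrivial (En n) :=
    ⟨0, EuclideanSpace.single ⟨0, hn⟩ 1, by
      intro hc
      have := congrArg (fun v : En n => v ⟨0, hn⟩) hc
      simp [EuclideanSpace.single] at this⟩
  infer_instance

lemma ae_ne_zero (hn : 0 < n) : ∀ᵐ h : En n ∂volume, h ≠ 0 := by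
  haveI := noAtoms_volume hn
  rw [ae_iff]
  have : {h : En n | ¬ h ≠ 0} = {(0 : En n)} := by
    ext h; simp
  rw [this]
  exact measure_singleton _

lemma besov_one (hn : 0 < n) (e : ℝ≥0∞) (u : En n → ℝ) :
    besov n α e 1 u = ∫⁻ h, eLpNorm (fun x => u (x+h) - u x) e volume * ker n α h := by
  rw [besov, if_neg (by norm_num)]
  simp only [ENNReal.toReal_one, ENNReal.rpow_one, one_mul, one_div_one]
  refine lintegral_congr_ae ((ae_ne_zero hn).mono fun h hh => ?_)
  have hpos : 0 < ‖h‖ := norm_pos_iff.mpr hh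
  simp only [div_eq_mul_inv]
  congr 1
  rw [ker]
  congr 1
  rw [← ofReal_norm_eq_coe_nnnorm]
  exact (ENNReal.ofReal_rpow_of_pos hpos).symm

lemma kernel_nnnorm (hna : 0 < (n:ℝ) + α) {h : En n} (hh : h ≠ 0) (a : ℝ) :
    (‖(‖h‖ ^ ((n:ℝ)+α+1))⁻¹ • (a • h)‖₊ : ℝ≥0∞) = (‖a‖₊ : ℝ≥0∞) * ker n α h := by
  have hpos : 0 < ‖h‖ := norm_pos_iff.mpr hh
  have hkpos : 0 < ‖h‖ ^ ((n:ℝ)+α) := Real.rpow_pos_of_pos hpos _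
  have hsplit : ‖h‖ ^ ((n:ℝ)+α+1) = ‖h‖ ^ ((n:ℝ)+α) * ‖h‖ := by
    rw [Real.rpow_add hpos, Real.rpow_one]
  have h2 : ENNReal.ofReal ((‖h‖ ^ ((n:ℝ)+α))⁻¹) = ker n α h := by
    rw [ENNReal.ofReal_inv_of_pos hkpos, ker]
    congr 1
    rw [← ofReal_norm_eq_coe_nnnorm]
    exact (ENNReal.ofReal_rpow_of_pos hpos).symm
  rw [smul_smul, ← ofReal_norm_eq_coe_nnnorm, ← ofReal_norm_eq_coe_nnnorm]
  rw [norm_smul, Real.norm_eq_abs]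
  have habs : |(‖h‖ ^ ((n:ℝ)+α+1))⁻¹ * a| * ‖h‖ = ‖a‖ * (‖h‖ ^ ((n:ℝ)+α))⁻¹ := by
    rw [abs_mul, abs_inv, abs_of_nonneg (Real.rpow_nonneg (norm_nonneg h) _), hsplit,
      Real.norm_eq_abs, mul_inv]
    field_simp
  rw [habs, ENNReal.ofReal_mul (norm_nonneg a), h2]

lemma lintegral_shift (x : En n) {W : En n → ℝ≥0∞} (hW : Measurable W) :
    ∫⁻ y, W y ∂volume = ∫⁻ h, W (x + h) ∂volume :=
  ((measurePreserving_add_left (volume : Measure (En n)) x).lintegral_comp hW).symm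

lemma measurable_grad_integrand {u : En n → ℝ} (hum : Measurable u) (x : En n) :
    Measurable fun y : En n => (‖y - x‖ ^ ((n:ℝ)+α+1))⁻¹ • ((u y - u x) • (y - x)) := by
  have h1 : Measurable fun y : En n => y - x := measurable_id.sub_const x
  have h2 : Measurable fun y : En n => (‖y - x‖ ^ ((n:ℝ)+α+1))⁻¹ :=
    ((h1.norm).pow_const _).inv
  exact h2.smul ((hum.sub_const (u x)).smul h1)

lemma lint_grad (hn : 0 < n) (hna : 0 < (n:ℝ) + α) {u : En n → ℝ} (hum : Measurable u)
    (x : En n) :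
    ∫⁻ y, (‖(‖y - x‖ ^ ((n:ℝ)+α+1))⁻¹ • ((u y - u x) • (y - x))‖₊ : ℝ≥0∞) ∂volume
      = Phi n α u x := by
  rw [lintegral_shift (W := fun y => (‖(‖y - x‖ ^ ((n:ℝ)+α+1))⁻¹ • ((u y - u x) • (y - x))‖₊ : ℝ≥0∞)) x
    ((measurable_grad_integrand hum x).enorm)]
  refine lintegral_congr_ae ((ae_ne_zero hn).mono fun h hh => ?_)
  simp only [add_sub_cancel_left]
  exact kernel_nnnorm hna hh _

lemma measurable_gradNL_integrand {f g : En n → ℝ} (hfm : Measurable f) (hgm : Measurable g)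
    (x : En n) :
    Measurable fun y : En n =>
      (‖y - x‖ ^ ((n:ℝ)+α+1))⁻¹ • (((f y - f x) * (g y - g x)) • (y - x)) := by
  have h1 : Measurable fun y : En n => y - x := measurable_id.sub_const x
  have h2 : Measurable fun y : En n => (‖y - x‖ ^ ((n:ℝ)+α+1))⁻¹ :=
    ((h1.norm).pow_const _).inv
  exact h2.smul (((hfm.sub_const (f x)).mul (hgm.sub_const (g x))).smul h1)

lemma lint_gradNL (hn : 0 < n) (hna : 0 < (n:ℝ) + α) {f g : En n → ℝ}
    (hfm : Measurable f) (hgm : Measurable g) (x : En n) :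
    ∫⁻ y, (‖(‖y - x‖ ^ ((n:ℝ)+α+1))⁻¹ • (((f y - f x) * (g y - g x)) • (y - x))‖₊ : ℝ≥0∞) ∂volume
      = PhiNL n α f g x := by
  rw [lintegral_shift (W := fun y => (‖(‖y - x‖ ^ ((n:ℝ)+α+1))⁻¹ •
      (((f y - f x) * (g y - g x)) • (y - x))‖₊ : ℝ≥0∞)) x
    ((measurable_gradNL_integrand hfm hgm x).enorm)]
  refine lintegral_congr_ae ((ae_ne_zero hn).mono fun h hh => ?_)
  simp only [add_sub_cancel_left]
  rw [kernel_nnnorm hna hh _, nnnorm_mul, ENNReal.coe_mul]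

lemma grad_nnnorm_le (hn : 0 < n) (hna : 0 < (n:ℝ) + α) {u : En n → ℝ} (hum : Measurable u)
    (x : En n) :
    (‖fracGrad n α u x‖₊ : ℝ≥0∞) ≤ (‖muConst n α‖₊ : ℝ≥0∞) * Phi n α u x := by
  rw [fracGrad, nnnorm_smul, ENNReal.coe_mul]
  refine mul_le_mul_right ?_ _
  refine le_trans (enorm_integral_le_lintegral_enorm _) ?_
  exact le_of_eq (lint_grad hn hna hum x)

lemma gradNL_nnnorm_le (hn : 0 < n) (hna : 0 < (n:ℝ) + α) {f g : En n → ℝ}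
    (hfm : Measurable f) (hgm : Measurable g) (x : En n) :
    (‖fracGradNL n α f g x‖₊ : ℝ≥0∞) ≤ (‖muConst n α‖₊ : ℝ≥0∞) * PhiNL n α f g x := by
  rw [fracGradNL, nnnorm_smul, ENNReal.coe_mul]
  refine mul_le_mul_right ?_ _
  refine le_trans (enorm_integral_le_lintegral_enorm _) ?_
  exact le_of_eq (lint_gradNL hn hna hfm hgm x)

end Frac

section Frac2
open Filter Function

variable {n : ℕ} {α : ℝ}

lemma measurable_Phi {u : En n → ℝ} (hum : Measurable u) : Measurable (Phi n α u) := by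
  have hA : Measurable (uncurry fun x h : En n => (‖u (x+h) - u x‖₊ : ℝ≥0∞) * ker n α h) :=
    (((hum.comp (measurable_fst.add measurable_snd)).sub
      (hum.comp measurable_fst)).enorm).mul (measurable_ker.comp measurable_snd)
  exact hA.lintegral_prod_right'

lemma measurable_PhiNL {f g : En n → ℝ} (hfm : Measurable f) (hgm : Measurable g) :
    Measurable (PhiNL n α f g) := by
  have hA : Measurable (uncurry fun x h : En n =>
      (‖f (x+h) - f x‖₊ : ℝ≥0∞) * (‖g (x+h) - g x‖₊ : ℝ≥0∞) * ker n α h) :=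
    ((((hfm.comp (measurable_fst.add measurable_snd)).sub
      (hfm.comp measurable_fst)).enorm).mul
      (((hgm.comp (measurable_fst.add measurable_snd)).sub
      (hgm.comp measurable_fst)).enorm)).mul (measurable_ker.comp measurable_snd)
  exact hA.lintegral_prod_right'

lemma measurable_PhiA {f g : En n → ℝ} (hfm : Measurable f) (hgm : Measurable g) :
    Measurable (PhiA n α f g) := by
  have hA : Measurable (uncurry fun x h : En n =>
      (‖g (x+h)‖₊ : ℝ≥0∞) * (‖f (x+h) - f x‖₊ : ℝ≥0∞) * ker n α h) :=
    (((hgm.comp (measurable_fst.add measurable_snd)).enorm).mul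
      (((hfm.comp (measurable_fst.add measurable_snd)).sub
      (hfm.comp measurable_fst)).enorm)).mul (measurable_ker.comp measurable_snd)
  exact hA.lintegral_prod_right'

lemma eLpNorm_shift {e : ℝ≥0∞} {u : En n → ℝ} (hum : Measurable u) (h : En n) :
    eLpNorm (fun x => u (x + h)) e volume = eLpNorm u e volume :=
  eLpNorm_comp_measurePreserving hum.aestronglyMeasurable
    (measurePreserving_add_right volume h)

lemma eLpNorm_diff_le {e : ℝ≥0∞} (he : 1 ≤ e) {u : En n → ℝ} (hum : Measurable u) (h : En n) :
    eLpNorm (fun x => u (x + h) - u x) e volume ≤ 2 * eLpNorm u e volume := by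
  have h1 : AEStronglyMeasurable (fun x : En n => u (x + h)) volume :=
    (hum.comp (measurable_add_const h)).aestronglyMeasurable
  have h2 := eLpNorm_sub_le (f := fun x : En n => u (x + h)) (g := u)
    h1 hum.aestronglyMeasurable he
  refine le_trans h2 ?_
  rw [eLpNorm_shift hum h, two_mul]

lemma eN_Phi_le (hn : 0 < n) (hna : 0 < (n:ℝ)+α) {e : ℝ≥0∞} (he : 1 ≤ e)
    {u : En n → ℝ} (hum : Measurable u) :
    eN e (Phi n α u) volume ≤ besov n α e 1 u := by
  have he0 : e ≠ 0 := (lt_of_lt_of_le zero_lt_one he).ne'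
  have hA : Measurable (uncurry fun x h : En n => (‖u (x+h) - u x‖₊ : ℝ≥0∞) * ker n α h) :=
    (((hum.comp (measurable_fst.add measurable_snd)).sub
      (hum.comp measurable_fst)).enorm).mul (measurable_ker.comp measurable_snd)
  refine le_trans (eN_lintegral_le he hA) ?_
  rw [besov_one hn e u]
  refine lintegral_mono_ae ((ae_ne_zero hn).mono fun h hh => ?_)
  show eN e (fun x => (‖u (x+h) - u x‖₊ : ℝ≥0∞) * ker n α h) volume ≤
    eLpNorm (fun x => u (x+h) - u x) e volume * ker n α h
  rw [eLpNorm_eq_eN he0]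
  exact eN_mul_const he (ker_ne_top hna hh)

lemma eN_PhiA_le (hn : 0 < n) (hna : 0 < (n:ℝ)+α) {p q r : ℝ≥0∞}
    (hr : 1 ≤ r) (hpqr : 1/p + 1/q = 1/r)
    {f g : En n → ℝ} (hfm : Measurable f) (hgm : Measurable g) (hg : MemLp g q volume) :
    eN r (PhiA n α f g) volume ≤ eLpNorm g q volume * besov n α p 1 f := by
  have hr0 : r ≠ 0 := (lt_of_lt_of_le zero_lt_one hr).ne'
  have hA : Measurable (uncurry fun x h : En n =>
      (‖g (x+h)‖₊ : ℝ≥0∞) * (‖f (x+h) - f x‖₊ : ℝ≥0∞) * ker n α h) :=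
    (((hgm.comp (measurable_fst.add measurable_snd)).enorm).mul
      (((hfm.comp (measurable_fst.add measurable_snd)).sub
      (hfm.comp measurable_fst)).enorm)).mul (measurable_ker.comp measurable_snd)
  refine le_trans (eN_lintegral_le hr hA) ?_
  rw [besov_one hn p f, ← lintegral_const_mul' _ _ hg.eLpNorm_ne_top]
  refine lintegral_mono_ae ((ae_ne_zero hn).mono fun h hh => ?_)
  show eN r (fun x => (‖g (x+h)‖₊ : ℝ≥0∞) * (‖f (x+h) - f x‖₊ : ℝ≥0∞) * ker n α h) volume ≤
    eLpNorm g q volume * (eLpNorm (fun x => f (x+h) - f x) p volume * ker n α h)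
  refine le_trans (eN_mul_const hr (ker_ne_top hna hh)) ?_
  rw [← mul_assoc]
  refine mul_le_mul_left ?_ _
  have hre : (fun x => (‖g (x+h)‖₊ : ℝ≥0∞) * (‖f (x+h) - f x‖₊ : ℝ≥0∞)) =
      fun x => (‖g (x+h) * (f (x+h) - f x)‖₊ : ℝ≥0∞) := by
    funext x; rw [nnnorm_mul, ENNReal.coe_mul]
  rw [hre, ← eLpNorm_eq_eN hr0]
  have hH := eLpNorm_le_eLpNorm_mul_eLpNorm'_of_norm (μ := (volume : Measure (En n)))
    (p := q) (q := p) (r := r)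
    (f := fun x => g (x+h)) (g := fun x => f (x+h) - f x)
    ((hgm.comp (measurable_add_const h)).aestronglyMeasurable)
    (((hfm.comp (measurable_add_const h)).sub hfm).aestronglyMeasurable)
    (fun a b => a * b) 1
    (Eventually.of_forall fun x => by rw [NNReal.coe_one, one_mul]; exact le_of_eq (norm_mul _ _))
    (hpqr := ⟨by rw [add_comm]; simpa only [one_div] using hpqr⟩)
  rw [ENNReal.coe_one, one_mul] at hH
  refine le_trans hH ?_
  rw [eLpNorm_shift hgm h]

lemma eN_PhiNL_le (hn : 0 < n) (hna : 0 < (n:ℝ)+α) {p q r : ℝ≥0∞}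
    (hq : 1 ≤ q) (hr : 1 ≤ r) (hpqr : 1/p + 1/q = 1/r)
    {f g : En n → ℝ} (hfm : Measurable f) (hgm : Measurable g) (hg : MemLp g q volume) :
    eN r (PhiNL n α f g) volume ≤ 2 * eLpNorm g q volume * besov n α p 1 f := by
  have hr0 : r ≠ 0 := (lt_of_lt_of_le zero_lt_one hr).ne'
  have hA : Measurable (uncurry fun x h : En n =>
      (‖f (x+h) - f x‖₊ : ℝ≥0∞) * (‖g (x+h) - g x‖₊ : ℝ≥0∞) * ker n α h) :=
    ((((hfm.comp (measurable_fst.add measurable_snd)).sub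
      (hfm.comp measurable_fst)).enorm).mul
      (((hgm.comp (measurable_fst.add measurable_snd)).sub
      (hgm.comp measurable_fst)).enorm)).mul (measurable_ker.comp measurable_snd)
  have hc : 2 * eLpNorm g q volume ≠ ∞ :=
    ENNReal.mul_ne_top (by norm_num) hg.eLpNorm_ne_top
  refine le_trans (eN_lintegral_le hr hA) ?_
  rw [besov_one hn p f, ← lintegral_const_mul' _ _ hc]
  refine lintegral_mono_ae ((ae_ne_zero hn).mono fun h hh => ?_)
  show eN r (fun x =>
      (‖f (x+h) - f x‖₊ : ℝ≥0∞) * (‖g (x+h) - g x‖₊ : ℝ≥0∞) * ker n α h) volume ≤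
    2 * eLpNorm g q volume * (eLpNorm (fun x => f (x+h) - f x) p volume * ker n α h)
  refine le_trans (eN_mul_const hr (ker_ne_top hna hh)) ?_
  have hgoal : eN r (fun x => (‖f (x+h) - f x‖₊ : ℝ≥0∞) * (‖g (x+h) - g x‖₊ : ℝ≥0∞)) volume ≤
      eLpNorm (fun x => f (x+h) - f x) p volume * (2 * eLpNorm g q volume) := by
    have hre : (fun x => (‖f (x+h) - f x‖₊ : ℝ≥0∞) * (‖g (x+h) - g x‖₊ : ℝ≥0∞)) =
        fun x => (‖(f (x+h) - f x) * (g (x+h) - g x)‖₊ : ℝ≥0∞) := by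
      funext x; rw [nnnorm_mul, ENNReal.coe_mul]
    rw [hre, ← eLpNorm_eq_eN hr0]
    have hH := eLpNorm_le_eLpNorm_mul_eLpNorm'_of_norm (μ := (volume : Measure (En n)))
      (p := p) (q := q) (r := r)
      (f := fun x => f (x+h) - f x) (g := fun x => g (x+h) - g x)
      (((hfm.comp (measurable_add_const h)).sub hfm).aestronglyMeasurable)
      (((hgm.comp (measurable_add_const h)).sub hgm).aestronglyMeasurable)
      (fun a b => a * b) 1
      (Eventually.of_forall fun x => by rw [NNReal.coe_one, one_mul]; exact le_of_eq (norm_mul _ _))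
      (hpqr := ⟨by simpa only [one_div] using hpqr⟩)
    rw [ENNReal.coe_one, one_mul] at hH
    refine le_trans hH (mul_le_mul_right ?_ _)
    exact eLpNorm_diff_le hq hgm h
  calc eN r (fun x => (‖f (x+h) - f x‖₊ : ℝ≥0∞) * (‖g (x+h) - g x‖₊ : ℝ≥0∞)) volume * ker n α h
      ≤ eLpNorm (fun x => f (x+h) - f x) p volume * (2 * eLpNorm g q volume) * ker n α h :=
        mul_le_mul_left hgoal _
    _ = 2 * eLpNorm g q volume * (eLpNorm (fun x => f (x+h) - f x) p volume * ker n α h) := by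
        ring

lemma eN_Bterm_le {p q r : ℝ≥0∞} (hq : 1 ≤ q) (hr : 1 ≤ r) (hpqr : 1/p + 1/q = 1/r)
    {f : En n → ℝ} {Φ : En n → ℝ≥0∞} (hfm : Measurable f) (hΦm : Measurable Φ)
    (hfin : ∀ᵐ x ∂(volume : Measure (En n)), Φ x < ∞) :
    eN r (fun x => (‖f x‖₊ : ℝ≥0∞) * Φ x) volume ≤ eLpNorm f p volume * eN q Φ volume := by
  have hr0 : r ≠ 0 := (lt_of_lt_of_le zero_lt_one hr).ne'
  have hq0 : q ≠ 0 := (lt_of_lt_of_le zero_lt_one hq).ne'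
  have hcongr : (fun x => (‖f x‖₊ : ℝ≥0∞) * Φ x) =ᵐ[(volume : Measure (En n))]
      (fun x => (‖f x * (Φ x).toReal‖₊ : ℝ≥0∞)) := by
    filter_upwards [hfin] with x hx
    rw [nnnorm_mul, ENNReal.coe_mul]
    congr 1
    rw [← ofReal_norm_eq_coe_nnnorm, Real.norm_eq_abs, abs_of_nonneg ENNReal.toReal_nonneg,
      ENNReal.ofReal_toReal hx.ne]
  rw [eN_congr_ae hcongr, ← eLpNorm_eq_eN hr0]
  have hH := eLpNorm_le_eLpNorm_mul_eLpNorm'_of_norm (μ := (volume : Measure (En n)))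
    (p := p) (q := q) (r := r)
    (f := f) (g := fun x => (Φ x).toReal)
    hfm.aestronglyMeasurable
    (ENNReal.measurable_toReal.comp hΦm).aestronglyMeasurable
    (fun a b => a * b) 1
    (Eventually.of_forall fun x => by rw [NNReal.coe_one, one_mul]; exact le_of_eq (norm_mul _ _))
    (hpqr := ⟨by simpa only [one_div] using hpqr⟩)
  rw [ENNReal.coe_one, one_mul] at hH
  refine le_trans hH (mul_le_mul_right ?_ _)
  rw [eLpNorm_eq_eN hq0]
  refine eN_mono (Eventually.of_forall fun x => ?_)
  show (‖(Φ x).toReal‖₊ : ℝ≥0∞) ≤ Φ x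
  rw [← ofReal_norm_eq_coe_nnnorm, Real.norm_eq_abs, abs_of_nonneg ENNReal.toReal_nonneg]
  exact ENNReal.ofReal_toReal_le

lemma Phi_mul_le {f g : En n → ℝ} (hfm : Measurable f) (hgm : Measurable g) (x : En n) :
    Phi n α (fun z => f z * g z) x ≤ PhiA n α f g x + (‖f x‖₊ : ℝ≥0∞) * Phi n α g x := by
  rw [Phi, PhiA, Phi, ← lintegral_const_mul' _ _ (ENNReal.coe_ne_top (r := ‖f x‖₊)),
    ← lintegral_add_left]
  · refine lintegral_mono fun h => ?_
    have hid : f (x+h) * g (x+h) - f x * g x =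
        g (x+h) * (f (x+h) - f x) + f x * (g (x+h) - g x) := by ring
    have hnum : (‖f (x+h) * g (x+h) - f x * g x‖₊ : ℝ≥0∞) ≤
        (‖g (x+h)‖₊ : ℝ≥0∞) * (‖f (x+h) - f x‖₊ : ℝ≥0∞) +
        (‖f x‖₊ : ℝ≥0∞) * (‖g (x+h) - g x‖₊ : ℝ≥0∞) := by
      rw [hid]
      refine le_trans (ENNReal.coe_le_coe.mpr (nnnorm_add_le _ _)) ?_
      rw [ENNReal.coe_add, nnnorm_mul, nnnorm_mul, ENNReal.coe_mul, ENNReal.coe_mul]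
    calc (‖f (x+h) * g (x+h) - f x * g x‖₊ : ℝ≥0∞) * ker n α h
        ≤ ((‖g (x+h)‖₊ : ℝ≥0∞) * (‖f (x+h) - f x‖₊ : ℝ≥0∞) +
          (‖f x‖₊ : ℝ≥0∞) * (‖g (x+h) - g x‖₊ : ℝ≥0∞)) * ker n α h :=
          mul_le_mul_left hnum _
      _ = (‖g (x+h)‖₊ : ℝ≥0∞) * (‖f (x+h) - f x‖₊ : ℝ≥0∞) * ker n α h +
          (‖f x‖₊ : ℝ≥0∞) * ((‖g (x+h) - g x‖₊ : ℝ≥0∞) * ker n α h) := by ring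
  · have mshift : Measurable fun h : En n => x + h := measurable_id.const_add x
    exact (((hgm.comp mshift).enorm).mul
      (((hfm.comp mshift).sub measurable_const).enorm)).mul measurable_ker

lemma integrable_grad_integrand (hn : 0 < n) (hna : 0 < (n:ℝ)+α) {u : En n → ℝ}
    (hum : Measurable u) {x : En n} (hx : Phi n α u x ≠ ∞) :
    Integrable (fun y => (‖y - x‖ ^ ((n:ℝ)+α+1))⁻¹ • ((u y - u x) • (y - x))) volume := by
  refine ⟨(measurable_grad_integrand hum x).aestronglyMeasurable, ?_⟩
  show (∫⁻ y, _ ∂volume) < ∞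
  refine lt_of_le_of_lt (le_of_eq (lint_grad hn hna hum x)) ?_
  exact hx.lt_top

lemma integrable_gradNL_integrand (hn : 0 < n) (hna : 0 < (n:ℝ)+α) {f g : En n → ℝ}
    (hfm : Measurable f) (hgm : Measurable g) {x : En n} (hx : PhiNL n α f g x ≠ ∞) :
    Integrable (fun y =>
      (‖y - x‖ ^ ((n:ℝ)+α+1))⁻¹ • (((f y - f x) * (g y - g x)) • (y - x))) volume := by
  refine ⟨(measurable_gradNL_integrand hfm hgm x).aestronglyMeasurable, ?_⟩
  show (∫⁻ y, _ ∂volume) < ∞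
  refine lt_of_le_of_lt (le_of_eq (lint_gradNL hn hna hfm hgm x)) ?_
  exact hx.lt_top

lemma grad_split (hn : 0 < n) (hna : 0 < (n:ℝ)+α) {f g : En n → ℝ}
    (hfm : Measurable f) (hgm : Measurable g) {x : En n}
    (h1 : Phi n α f x ≠ ∞) (h2 : Phi n α g x ≠ ∞) (h3 : PhiNL n α f g x ≠ ∞) :
    fracGrad n α (fun z => f z * g z) x =
      g x • fracGrad n α f x + f x • fracGrad n α g x + fracGradNL n α f g x := by
  have hIf := integrable_grad_integrand hn hna hfm h1
  have hIg := integrable_grad_integrand hn hna hgm h2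
  have hInl := integrable_gradNL_integrand hn hna hfm hgm h3
  have hid : ∀ y : En n,
      (‖y - x‖ ^ ((n:ℝ)+α+1))⁻¹ • ((f y * g y - f x * g x) • (y - x)) =
      g x • ((‖y - x‖ ^ ((n:ℝ)+α+1))⁻¹ • ((f y - f x) • (y - x))) +
      f x • ((‖y - x‖ ^ ((n:ℝ)+α+1))⁻¹ • ((g y - g x) • (y - x))) +
      (‖y - x‖ ^ ((n:ℝ)+α+1))⁻¹ • (((f y - f x) * (g y - g x)) • (y - x)) := by
    intro y
    simp only [smul_smul, ← add_smul]
    congr 1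
    ring
  have hs1 : Integrable (fun y : En n =>
      g x • ((‖y - x‖ ^ ((n:ℝ)+α+1))⁻¹ • ((f y - f x) • (y - x)))) volume := hIf.smul (g x)
  have hs2 : Integrable (fun y : En n =>
      f x • ((‖y - x‖ ^ ((n:ℝ)+α+1))⁻¹ • ((g y - g x) • (y - x)))) volume := hIg.smul (f x)
  have hadd1 : Integrable (fun y : En n =>
      g x • ((‖y - x‖ ^ ((n:ℝ)+α+1))⁻¹ • ((f y - f x) • (y - x))) +
      f x • ((‖y - x‖ ^ ((n:ℝ)+α+1))⁻¹ • ((g y - g x) • (y - x)))) volume := hs1.add hs2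
  rw [fracGrad, fracGrad, fracGrad, fracGradNL]
  rw [integral_congr_ae (Eventually.of_forall hid)]
  rw [integral_add hadd1 hInl, integral_add hs1 hs2, integral_smul, integral_smul]
  rw [smul_add, smul_add, smul_comm (muConst n α) (g x), smul_comm (muConst n α) (f x)]

lemma aesm_fracGrad {u : En n → ℝ} (hum : Measurable u) :
    AEStronglyMeasurable (fracGrad n α u) volume := by
  have hint : Measurable fun p : En n × En n =>
      (‖p.2 - p.1‖ ^ ((n:ℝ)+α+1))⁻¹ • ((u p.2 - u p.1) • (p.2 - p.1)) := by
    have hker : Measurable fun p : En n × En n => (‖p.2 - p.1‖ ^ ((n:ℝ)+α+1))⁻¹ :=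
      (((measurable_snd.sub measurable_fst).norm).pow_const _).inv
    exact hker.smul (((hum.comp measurable_snd).sub (hum.comp measurable_fst)).smul
      (measurable_snd.sub measurable_fst))
  have h2 : StronglyMeasurable fun x : En n =>
      ∫ y, (‖y - x‖ ^ ((n:ℝ)+α+1))⁻¹ • ((u y - u x) • (y - x)) ∂volume :=
    hint.stronglyMeasurable.integral_prod_right'
  exact (h2.const_smul (muConst n α)).aestronglyMeasurable

lemma fracGrad_congr_ae {u v : En n → ℝ} (huv : u =ᵐ[volume] v) :
    fracGrad n α u =ᵐ[volume] fracGrad n α v := by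
  filter_upwards [huv] with x hx
  rw [fracGrad, fracGrad]
  congr 1
  refine integral_congr_ae ?_
  filter_upwards [huv] with y hy
  rw [hx, hy]

lemma fracGradNL_congr_ae {f g f' g' : En n → ℝ} (hff : f =ᵐ[volume] f')
    (hgg : g =ᵐ[volume] g') :
    fracGradNL n α f g =ᵐ[volume] fracGradNL n α f' g' := by
  filter_upwards [hff, hgg] with x hx1 hx2
  rw [fracGradNL, fracGradNL]
  congr 1
  refine integral_congr_ae ?_
  filter_upwards [hff, hgg] with y hy1 hy2
  rw [hx1, hx2, hy1, hy2]

lemma besov_congr_ae {e : ℝ≥0∞} {u v : En n → ℝ} (huv : u =ᵐ[volume] v) :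
    besov n α e 1 u = besov n α e 1 v := by
  rw [besov, besov, if_neg (by simp : ¬ (1:ℝ≥0∞) = ∞), if_neg (by simp : ¬ (1:ℝ≥0∞) = ∞)]
  congr 1
  refine lintegral_congr fun h => ?_
  have hshift : (fun x : En n => u (x+h)) =ᵐ[volume] fun x => v (x+h) :=
    (measurePreserving_add_right volume h).quasiMeasurePreserving.ae_eq_comp huv
  have hdiff : (fun x : En n => u (x+h) - u x) =ᵐ[volume] fun x => v (x+h) - v x :=
    hshift.sub huv
  rw [eLpNorm_congr_ae hdiff]

end Frac2

section Main
open Filter Function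

lemma key (n : ℕ) (hn : 0 < n) (α : ℝ) (hα : α ∈ Set.Ioo (0 : ℝ) 1)
    (p q r : ℝ≥0∞) (hp : 1 ≤ p) (hq : 1 ≤ q) (hr : 1 ≤ r)
    (hpqr : 1 / p + 1 / q = 1 / r)
    (f g : En n → ℝ) (hfm : Measurable f) (hgm : Measurable g)
    (hf : MemLp f p volume) (hfB : besov n α p 1 f < ∞)
    (hg : MemLp g q volume) (hgB : besov n α q 1 g < ∞) :
    MemLp (fracGrad n α (fun x => f x * g x)) r volume ∧
    (fracGrad n α (fun x => f x * g x)) =ᵐ[volume]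
      fun x => g x • fracGrad n α f x + f x • fracGrad n α g x + fracGradNL n α f g x := by
  have hna : 0 < (n:ℝ) + α := by
    have h1 : (1:ℝ) ≤ (n:ℝ) := by exact_mod_cast hn
    linarith [hα.1]
  have hr0 : r ≠ 0 := (lt_of_lt_of_le zero_lt_one hr).ne'
  have hfgm : Measurable fun x => f x * g x := hfm.mul hgm
  have hPf : ∀ᵐ x ∂(volume : Measure (En n)), Phi n α f x < ∞ :=
    eN_ae_lt_top hp (measurable_Phi hfm).aemeasurable
      (lt_of_le_of_lt (eN_Phi_le hn hna hp hfm) hfB).ne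
  have hPg : ∀ᵐ x ∂(volume : Measure (En n)), Phi n α g x < ∞ :=
    eN_ae_lt_top hq (measurable_Phi hgm).aemeasurable
      (lt_of_le_of_lt (eN_Phi_le hn hna hq hgm) hgB).ne
  have hPnl : ∀ᵐ x ∂(volume : Measure (En n)), PhiNL n α f g x < ∞ := by
    refine eN_ae_lt_top hr (measurable_PhiNL hfm hgm).aemeasurable ?_
    refine (lt_of_le_of_lt (eN_PhiNL_le hn hna hq hr hpqr hfm hgm hg) ?_).ne
    exact ENNReal.mul_lt_top
      (ENNReal.mul_lt_top (lt_top_iff_ne_top.mpr (by norm_num)) hg.eLpNorm_lt_top) hfB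
  constructor
  · refine ⟨aesm_fracGrad hfgm, ?_⟩
    rw [eLpNorm_eq_eN hr0]
    have hb1 : eN r (fun x => (‖fracGrad n α (fun z => f z * g z) x‖₊ : ℝ≥0∞)) volume ≤
        (‖muConst n α‖₊ : ℝ≥0∞) * eN r (Phi n α (fun z => f z * g z)) volume := by
      refine le_trans (eN_mono (Eventually.of_forall fun x =>
        grad_nnnorm_le hn hna hfgm x)) ?_
      exact eN_const_mul hr ENNReal.coe_ne_top
    have hb2 : eN r (Phi n α (fun z => f z * g z)) volume ≤
        eN r (PhiA n α f g) volume +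
        eN r (fun x => (‖f x‖₊ : ℝ≥0∞) * Phi n α g x) volume := by
      refine le_trans (eN_mono (Eventually.of_forall fun x => Phi_mul_le hfm hgm x)) ?_
      exact eN_add_le hr (measurable_PhiA hfm hgm).aemeasurable
        ((hfm.enorm.mul (measurable_Phi hgm)).aemeasurable)
    have hA : eN r (PhiA n α f g) volume < ∞ :=
      lt_of_le_of_lt (eN_PhiA_le hn hna hr hpqr hfm hgm hg)
        (ENNReal.mul_lt_top hg.eLpNorm_lt_top hfB)
    have hB : eN r (fun x => (‖f x‖₊ : ℝ≥0∞) * Phi n α g x) volume < ∞ := by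
      refine lt_of_le_of_lt (eN_Bterm_le hq hr hpqr hfm (measurable_Phi hgm) hPg) ?_
      exact ENNReal.mul_lt_top hf.eLpNorm_lt_top
        (lt_of_le_of_lt (eN_Phi_le hn hna hq hgm) hgB)
    refine lt_of_le_of_lt hb1 ?_
    refine ENNReal.mul_lt_top ENNReal.coe_lt_top ?_
    exact lt_of_le_of_lt hb2 (ENNReal.add_lt_top.mpr ⟨hA, hB⟩)
  · filter_upwards [hPf, hPg, hPnl] with x h1 h2 h3
    exact grad_split hn hna hfm hgm h1.ne h2.ne h3.ne

end Main
end FracAux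

open FracAux in
theorem statement6 (n : ℕ) (α : ℝ) (hα : α ∈ Set.Ioo (0 : ℝ) 1)
    (p q r : ℝ≥0∞) (hp : 1 ≤ p) (hq : 1 ≤ q) (hr : 1 ≤ r)
    (hpqr : 1 / p + 1 / q = 1 / r)
    (f g : En n → ℝ) (hf : MemLp f p volume) (hfB : besov n α p 1 f < ∞)
    (hg : MemLp g q volume) (hgB : besov n α q 1 g < ∞) :
    MemLp (fracGrad n α (fun x => f x * g x)) r volume ∧
    (fracGrad n α (fun x => f x * g x)) =ᵐ[volume]
      fun x => g x • fracGrad n α f x + f x • fracGrad n α g x + fracGradNL n α f g x := by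
  rcases Nat.eq_zero_or_pos n with hn0 | hn
  · subst hn0
    have hyx : ∀ y x : En 0, y - x = 0 := by
      intro y x
      exact PiLp.ext fun i => i.elim0
    have hzero : ∀ u : En 0 → ℝ, fracGrad 0 α u = fun _ => 0 := by
      intro u
      funext x
      rw [fracGrad]
      simp only [hyx, smul_zero, integral_zero]
    have hzeroNL : fracGradNL 0 α f g = fun _ => 0 := by
      funext x
      rw [fracGradNL]
      simp only [hyx, smul_zero, integral_zero]
    constructor
    · rw [hzero]
      exact MemLp.zero
    · refine Filter.Eventually.of_forall fun x => ?_
      simp only [hzero, hzeroNL]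
      simp
  · obtain ⟨f₀, hf₀sm, hff₀⟩ := hf.aestronglyMeasurable
    obtain ⟨g₀, hg₀sm, hgg₀⟩ := hg.aestronglyMeasurable
    have hf₀m := hf₀sm.measurable
    have hg₀m := hg₀sm.measurable
    have hf₀ : MemLp f₀ p volume := hf.ae_eq hff₀
    have hg₀ : MemLp g₀ q volume := hg.ae_eq hgg₀
    have hfB₀ : besov n α p 1 f₀ < ∞ := by
      rw [← besov_congr_ae hff₀]; exact hfB
    have hgB₀ : besov n α q 1 g₀ < ∞ := by
      rw [← besov_congr_ae hgg₀]; exact hgB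
    obtain ⟨hmem, hae⟩ := key n hn α hα p q r hp hq hr hpqr f₀ g₀ hf₀m hg₀m
      hf₀ hfB₀ hg₀ hgB₀
    have hmul : (fun x => f₀ x * g₀ x) =ᵐ[volume] (fun x => f x * g x) := by
      filter_upwards [hff₀, hgg₀] with x h1 h2
      rw [h1, h2]
    have hgradmul := fracGrad_congr_ae (n := n) (α := α) hmul
    constructor
    · exact hmem.ae_eq hgradmul
    · refine hgradmul.symm.trans (hae.trans ?_)
      filter_upwards [hff₀, hgg₀, fracGrad_congr_ae (n := n) (α := α) hff₀,
        fracGrad_congr_ae (n := n) (α := α) hgg₀,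
        fracGradNL_congr_ae (n := n) (α := α) hff₀ hgg₀] with x e1 e2 e3 e4 e5
      rw [← e1, ← e2, ← e3, ← e4, ← e5]
end

section
/- Let α ∈ (0,1) and let p, q, r ∈ [1,+∞] with 1/p + 1/q = 1/r and r = 1. If f ∈ B^α_{p,1}(ℝ^n) and g ∈ B^α_{q,1}(ℝ^n), then ∫_{ℝ^n} ∇^α(fg) dx = 0. -/
open MeasureTheory Metric
open scoped ENNReal NNReal

theorem statement9 (n : ℕ) (α : ℝ) (hα : α ∈ Set.Ioo (0 : ℝ) 1)
    (p q : ℝ≥0∞) (hp : 1 ≤ p) (hq : 1 ≤ q) (hpq : 1 / p + 1 / q = 1)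
    (f g : En n → ℝ) (hf : MemLp f p volume) (hfB : besov n α p 1 f < ∞)
    (hg : MemLp g q volume) (hgB : besov n α q 1 g < ∞) :
    ∫ x, fracGrad n α (fun y => f y * g y) x = 0 := by
  obtain ⟨hα0, hα1⟩ := hα
  have hc0 : (0:ℝ) < (n : ℝ) + α := add_pos_of_nonneg_of_pos (Nat.cast_nonneg n) hα0
  set u : En n → ℝ := fun y => f y * g y with hudef
  have hu_m : AEStronglyMeasurable u volume := hf.1.mul hg.1
  have h1pq : (1 : ℝ≥0∞) / 1 = 1 / p + 1 / q := by rw [one_div_one]; exact hpq.symm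
  have mpr : ∀ h : En n, MeasurePreserving (fun x : En n => x + h) volume volume :=
    fun h => measurePreserving_add_right volume h
  have hfm : ∀ h : En n, AEStronglyMeasurable (fun x => f (x + h)) volume :=
    fun h => hf.1.comp_quasiMeasurePreserving (mpr h).quasiMeasurePreserving
  have hgm : ∀ h : En n, AEStronglyMeasurable (fun x => g (x + h)) volume :=
    fun h => hg.1.comp_quasiMeasurePreserving (mpr h).quasiMeasurePreserving
  -- Hölder's inequality specialized to `L^p * L^q ⊆ L^1`
  have holder : ∀ φ ψ : En n → ℝ, AEStronglyMeasurable φ volume → AEStronglyMeasurable ψ volume →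
      (∫⁻ x, (‖φ x * ψ x‖₊ : ℝ≥0∞)) ≤ eLpNorm φ p volume * eLpNorm ψ q volume := by
    intro φ ψ hφ hψ
    have := eLpNorm_le_eLpNorm_mul_eLpNorm'_of_norm hφ hψ (· * ·) 1
      (Filter.Eventually.of_forall fun x => by simp [norm_mul])
      (p := p) (q := q) (r := 1) (hpqr := ⟨by simpa [one_div] using hpq⟩)
    rwa [eLpNorm_one_eq_lintegral_enorm, ENNReal.coe_one, one_mul] at this
  have hu_int : Integrable u volume := by
    rw [← memLp_one_iff_integrable]
    refine ⟨hu_m, ?_⟩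
    rw [eLpNorm_one_eq_lintegral_enorm]
    exact lt_of_le_of_lt (holder f g hf.1 hg.1) (ENNReal.mul_lt_top hf.2 hg.2)
  -- the weight
  set w : En n → ℝ≥0∞ := fun h => (ENNReal.ofReal (‖h‖ ^ ((n : ℝ) + α)))⁻¹ with hwdef
  have w_meas : Measurable w := by
    rw [hwdef]
    exact (ENNReal.measurable_ofReal.comp
      (((Real.continuous_rpow_const hc0.le).comp continuous_norm).measurable)).inv
  have besov_eq : ∀ (r : ℝ≥0∞) (φ : En n → ℝ), besov n α r 1 φ
      = ∫⁻ h, eLpNorm (fun x => φ (x + h) - φ x) r volume * w h := by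
    intro r φ
    rw [besov, if_neg ENNReal.one_ne_top]
    simp only [ENNReal.toReal_one, ENNReal.rpow_one, one_mul, one_div_one, inv_one, hwdef,
      div_eq_mul_inv]
  have hfB' : (∫⁻ h, eLpNorm (fun x => f (x + h) - f x) p volume * w h) < ⊤ := by
    rw [← besov_eq]; exact hfB
  have hgB' : (∫⁻ h, eLpNorm (fun x => g (x + h) - g x) q volume * w h) < ⊤ := by
    rw [← besov_eq]; exact hgB
  -- measurability on the product space
  have Tqmp : Measure.QuasiMeasurePreserving (fun z : En n × En n => (z.1, z.1 + z.2))
      (volume.prod volume) (volume.prod volume) :=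
    (measurePreserving_prod_add volume volume).quasiMeasurePreserving
  have prodm : ∀ φ : En n → ℝ, AEStronglyMeasurable φ volume →
      AEStronglyMeasurable (fun z : En n × En n => φ (z.1 + z.2)) (volume.prod volume) :=
    fun φ hφ =>
      (hφ.comp_quasiMeasurePreserving
        Measure.quasiMeasurePreserving_snd).comp_quasiMeasurePreserving Tqmp
  have prodm0 : ∀ φ : En n → ℝ, AEStronglyMeasurable φ volume →
      AEStronglyMeasurable (fun z : En n × En n => φ z.1) (volume.prod volume) :=
    fun φ hφ => hφ.comp_quasiMeasurePreserving Measure.quasiMeasurePreserving_fst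
  -- the shifted kernel
  set G : En n × En n → En n := fun z =>
    (‖z.2‖ ^ ((n : ℝ) + α + 1))⁻¹ • ((u (z.1 + z.2) - u z.1) • z.2) with hGdef
  have hG_sm : AEStronglyMeasurable G (volume.prod volume) := by
    rw [hGdef]
    apply AEStronglyMeasurable.smul
      (f := fun z : En n × En n => (‖z.2‖ ^ ((n : ℝ) + α + 1))⁻¹)
      (g := fun z : En n × En n => (u (z.1 + z.2) - u z.1) • z.2)
    · apply Measurable.aestronglyMeasurable
      exact (((Real.continuous_rpow_const (by positivity)).comp
        (continuous_norm.comp continuous_snd)).measurable).inv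
    · exact ((prodm u hu_m).sub (prodm0 u hu_m)).smul measurable_snd.aestronglyMeasurable
  -- pointwise bound on ‖G‖
  have Gbound : ∀ z : En n × En n,
      (‖G z‖₊ : ℝ≥0∞) ≤ (‖u (z.1 + z.2) - u z.1‖₊ : ℝ≥0∞) * w z.2 := by
    rintro ⟨x, h⟩
    by_cases hh : h = 0
    · simp [hGdef, hh]
    · have hn : (0:ℝ) < ‖h‖ := norm_pos_iff.mpr hh
      have hcpos : (0:ℝ) < ‖h‖ ^ ((n : ℝ) + α) := Real.rpow_pos_of_pos hn _
      have e1 : ‖G (x, h)‖ = |u (x + h) - u x| * (‖h‖ ^ ((n : ℝ) + α))⁻¹ := by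
        simp only [hGdef]
        rw [norm_smul, norm_smul, Real.norm_eq_abs, Real.norm_eq_abs,
          abs_of_nonneg (inv_nonneg.mpr (Real.rpow_nonneg (norm_nonneg _) _)),
          Real.rpow_add hn, Real.rpow_one]
        field_simp
      refine le_of_eq ?_
      calc (‖G (x, h)‖₊ : ℝ≥0∞) = ENNReal.ofReal ‖G (x, h)‖ :=
            (ofReal_norm_eq_enorm _).symm
        _ = ENNReal.ofReal (|u (x + h) - u x|)
              * ENNReal.ofReal ((‖h‖ ^ ((n : ℝ) + α))⁻¹) := by
            rw [e1, ENNReal.ofReal_mul (abs_nonneg _)]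
        _ = (‖u (x + h) - u x‖₊ : ℝ≥0∞) * w h := by
            rw [ENNReal.ofReal_inv_of_pos hcpos, hwdef]
            congr 1
            rw [← Real.norm_eq_abs]; exact ofReal_norm_eq_enorm _
  -- splitting the difference of products
  set Φ₁ : En n × En n → ℝ≥0∞ := fun z =>
    (‖(f (z.1 + z.2) - f z.1) * g (z.1 + z.2)‖₊ : ℝ≥0∞) * w z.2 with hΦ₁
  set Φ₂ : En n × En n → ℝ≥0∞ := fun z =>
    (‖f z.1 * (g (z.1 + z.2) - g z.1)‖₊ : ℝ≥0∞) * w z.2 with hΦ₂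
  have hΦ₁m : AEMeasurable Φ₁ (volume.prod volume) := by
    rw [hΦ₁]
    exact (AEStronglyMeasurable.enorm
      (((prodm f hf.1).sub (prodm0 f hf.1)).mul (prodm g hg.1))).mul
      ((w_meas.comp measurable_snd).aemeasurable)
  have hΦ₂m : AEMeasurable Φ₂ (volume.prod volume) := by
    rw [hΦ₂]
    exact (AEStronglyMeasurable.enorm
      ((prodm0 f hf.1).mul ((prodm g hg.1).sub (prodm0 g hg.1)))).mul
      ((w_meas.comp measurable_snd).aemeasurable)
  have Φbound : ∀ z : En n × En n,
      (‖u (z.1 + z.2) - u z.1‖₊ : ℝ≥0∞) * w z.2 ≤ Φ₁ z + Φ₂ z := by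
    rintro ⟨x, h⟩
    simp only [hΦ₁, hΦ₂]
    rw [← add_mul]
    refine mul_le_mul_left ?_ _
    have : u (x + h) - u x
        = (f (x + h) - f x) * g (x + h) + f x * (g (x + h) - g x) := by
      simp only [hudef]; ring
    rw [this]
    exact_mod_cast nnnorm_add_le _ _
  -- per-`h` Hölder bounds
  have inner1 : ∀ h : En n, (∫⁻ x, (‖(f (x + h) - f x) * g (x + h)‖₊ : ℝ≥0∞))
      ≤ eLpNorm (fun x => f (x + h) - f x) p volume * eLpNorm g q volume := by
    intro h
    have e := eLpNorm_comp_measurePreserving (p := q) hg.1 (mpr h)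
    simp only [Function.comp_def] at e
    have := holder (fun x => f (x + h) - f x) (fun x => g (x + h)) ((hfm h).sub hf.1) (hgm h)
    rwa [e] at this
  have inner2 : ∀ h : En n, (∫⁻ x, (‖f x * (g (x + h) - g x)‖₊ : ℝ≥0∞))
      ≤ eLpNorm f p volume * eLpNorm (fun x => g (x + h) - g x) q volume :=
    fun h => holder f _ hf.1 ((hgm h).sub hg.1)
  -- finiteness of the two pieces
  have I1 : (∫⁻ z, Φ₁ z ∂(volume.prod (volume : Measure (En n)))) < ⊤ := by
    rw [lintegral_prod_symm _ hΦ₁m]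
    calc (∫⁻ h : En n, ∫⁻ x : En n, Φ₁ (x, h))
        ≤ ∫⁻ h : En n,
            (eLpNorm (fun x => f (x + h) - f x) p volume * eLpNorm g q volume) * w h := by
          refine lintegral_mono fun h => ?_
          have e : (∫⁻ x : En n, Φ₁ (x, h))
              = (∫⁻ x, (‖(f (x + h) - f x) * g (x + h)‖₊ : ℝ≥0∞)) * w h := by
            simp only [hΦ₁]
            exact lintegral_mul_const'' _
              (AEStronglyMeasurable.enorm (((hfm h).sub hf.1).mul (hgm h)))
          rw [e]
          exact mul_le_mul_left (inner1 h) _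
      _ = ∫⁻ h : En n,
            (eLpNorm (fun x => f (x + h) - f x) p volume * w h) * eLpNorm g q volume := by
          congr 1; funext h; ring
      _ = (∫⁻ h : En n, eLpNorm (fun x => f (x + h) - f x) p volume * w h)
            * eLpNorm g q volume := lintegral_mul_const' _ _ hg.2.ne
      _ < ⊤ := ENNReal.mul_lt_top hfB' hg.2
  have I2 : (∫⁻ z, Φ₂ z ∂(volume.prod (volume : Measure (En n)))) < ⊤ := by
    rw [lintegral_prod_symm _ hΦ₂m]
    calc (∫⁻ h : En n, ∫⁻ x : En n, Φ₂ (x, h))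
        ≤ ∫⁻ h : En n,
            (eLpNorm f p volume * eLpNorm (fun x => g (x + h) - g x) q volume) * w h := by
          refine lintegral_mono fun h => ?_
          have e : (∫⁻ x : En n, Φ₂ (x, h))
              = (∫⁻ x, (‖f x * (g (x + h) - g x)‖₊ : ℝ≥0∞)) * w h := by
            simp only [hΦ₂]
            exact lintegral_mul_const'' _
              (AEStronglyMeasurable.enorm (hf.1.mul ((hgm h).sub hg.1)))
          rw [e]
          exact mul_le_mul_left (inner2 h) _
      _ = ∫⁻ h : En n,
            eLpNorm f p volume * (eLpNorm (fun x => g (x + h) - g x) q volume * w h) := by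
          congr 1; funext h; ring
      _ = eLpNorm f p volume
            * ∫⁻ h : En n, eLpNorm (fun x => g (x + h) - g x) q volume * w h :=
          lintegral_const_mul' _ _ hf.2.ne
      _ < ⊤ := ENNReal.mul_lt_top hf.2 hgB'
  -- integrability of `G` on the product
  have hG_int : Integrable G ((volume : Measure (En n)).prod volume) := by
    refine ⟨hG_sm, ?_⟩
    show (∫⁻ z, (‖G z‖₊ : ℝ≥0∞) ∂((volume : Measure (En n)).prod volume)) < ⊤
    calc (∫⁻ z, (‖G z‖₊ : ℝ≥0∞) ∂((volume : Measure (En n)).prod volume))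
        ≤ ∫⁻ z, (Φ₁ z + Φ₂ z) ∂((volume : Measure (En n)).prod volume) :=
          lintegral_mono fun z => le_trans (Gbound z) (Φbound z)
      _ = (∫⁻ z, Φ₁ z ∂((volume : Measure (En n)).prod volume))
            + ∫⁻ z, Φ₂ z ∂((volume : Measure (En n)).prod volume) :=
          lintegral_add_left' hΦ₁m _
      _ < ⊤ := ENNReal.add_lt_top.mpr ⟨I1, I2⟩
  have hG_int' : Integrable (Function.uncurry fun (x h : En n) => G (x, h))
      ((volume : Measure (En n)).prod volume) := hG_int
  -- rewriting the inner integral of `fracGrad`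
  have step_inner : ∀ x : En n,
      (∫ y, (‖y - x‖ ^ ((n : ℝ) + α + 1))⁻¹ • ((u y - u x) • (y - x))) = ∫ h, G (x, h) := by
    intro x
    rw [← integral_add_left_eq_self
      (fun y => (‖y - x‖ ^ ((n : ℝ) + α + 1))⁻¹ • ((u y - u x) • (y - x))) x]
    congr 1
    funext h
    simp only [hGdef, add_sub_cancel_left]
  -- each slice integrates to zero
  have zero_slice : ∀ h : En n, (∫ x, G (x, h)) = 0 := by
    intro h
    have hint : Integrable (fun x => u (x + h)) volume :=
      ((mpr h).integrable_comp hu_m).mpr hu_int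
    have hz : (∫ x, (u (x + h) - u x)) = 0 := by
      rw [integral_sub hint hu_int, integral_add_right_eq_self u h, sub_self]
    calc (∫ x, G (x, h))
        = ∫ x, (‖h‖ ^ ((n : ℝ) + α + 1))⁻¹ • ((u (x + h) - u x) • h) := by
          simp only [hGdef]
      _ = (‖h‖ ^ ((n : ℝ) + α + 1))⁻¹ • ((∫ x, (u (x + h) - u x)) • h) := by
          rw [integral_smul, integral_smul_const]
      _ = 0 := by rw [hz, zero_smul, smul_zero]
  -- conclusion
  have frac_eq : ∀ x : En n, fracGrad n α u x = muConst n α • ∫ h, G (x, h) := by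
    intro x
    show muConst n α •
      (∫ y, (‖y - x‖ ^ ((n : ℝ) + α + 1))⁻¹ • ((u y - u x) • (y - x))) = _
    rw [step_inner x]
  calc (∫ x, fracGrad n α u x)
      = ∫ x, muConst n α • ∫ h, G (x, h) := by simp only [frac_eq]
    _ = muConst n α • ∫ x, ∫ h, G (x, h) := integral_smul _ _
    _ = muConst n α • ∫ h, ∫ x, G (x, h) := by
        rw [integral_integral_swap hG_int']
    _ = 0 := by simp [zero_slice]
end
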